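/- arXiv:2305.11046 — 13 statements merged into one kernel-verified Lean document; each statement's English description precedes it below -/
import Mathlib

section
/- Let g : ℝ^d → ℝ ∪ {+∞} be proper convex and ρ_g-strongly convex, and h : ℝ^d → ℝ be convex and ρ_h-strongly convex, with ρ_g, ρ_h ≥ 0. Let ε_x, ε_y ≥ 0, let x ∈ dom g, y ∈ ∂_{ε_y} h(x), and let x' ∈ dom g satisfy y ∈ ∂_{ε_x} g(x'). Then for all t_x, t_y ∈ (0,1], setting ρ̄ = ρ_g(1 − t_x) + ρ_h(1 − t_y) and ε̄ = ε_x/t_x + ε_y/t_y, one has (g(x) − h(x)) − (g(x') − h(x')) ≥ (ρ̄/2)‖x − x'‖² − ε̄. -/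
open RealInnerProductSpace

noncomputable section

/-- Euclidean space `ℝ^d`. -/
abbrev E (d : ℕ) := EuclideanSpace ℝ (Fin d)

/-- Convexity for extended-real-valued functions `ℝ^d → ℝ ∪ {+∞}` (modelled in `EReal`). -/
def ERealConvex {d : ℕ} (f : E d → EReal) : Prop :=
  ∀ x y : E d, ∀ t : ℝ, 0 ≤ t → t ≤ 1 →
    f ((1 - t) • x + t • y) ≤ ((1 - t : ℝ) : EReal) * f x + (t : EReal) * f y

/-- A proper function: never `−∞` and not identically `+∞`. -/
def ERealProper {d : ℕ} (f : E d → EReal) : Prop :=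
  (∀ x, f x ≠ ⊥) ∧ (∃ x, f x ≠ ⊤)

/-- The ε-subdifferential of `f` at `x`: the set of `y` such that `f x` is finite and
`f z ≥ f x + ⟨y, z − x⟩ − ε` for all `z`. -/
def epsSubdiff {d : ℕ} (f : E d → EReal) (ε : ℝ) (x : E d) : Set (E d) :=
  {y | (∃ r : ℝ, f x = (r : EReal)) ∧
    ∀ z : E d, f x + ((⟪y, z - x⟫ - ε : ℝ) : EReal) ≤ f z}

lemma aux_strong {d : ℕ} (ρ : ℝ) (t ε : ℝ) (ht : 0 < t) (ht1 : t ≤ 1)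
    (x x' y : E d) (a a' b : ℝ)
    (hconv : b - ρ / 2 * ‖(1 - t) • x' + t • x‖ ^ 2 ≤
      (1 - t) * (a' - ρ / 2 * ‖x'‖ ^ 2) + t * (a - ρ / 2 * ‖x‖ ^ 2))
    (hsub : a' + (⟪y, ((1 - t) • x' + t • x) - x'⟫ - ε) ≤ b) :
    ⟪y, x - x'⟫ - ε / t + ρ / 2 * (1 - t) * ‖x - x'‖ ^ 2 ≤ a - a' := by
  have hz : ((1 - t) • x' + t • x) - x' = t • (x - x') := by
    rw [smul_sub]; module
  rw [hz, real_inner_smul_right] at hsub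
  have hn1 : ‖(1 - t) • x' + t • x‖ ^ 2
      = (1-t)^2 * ‖x'‖^2 + 2*(t*(1-t))*⟪x', x⟫ + t^2*‖x‖^2 := by
    rw [← real_inner_self_eq_norm_sq, ← real_inner_self_eq_norm_sq,
      ← real_inner_self_eq_norm_sq]
    simp only [inner_add_add_self, real_inner_smul_left, real_inner_smul_right,
      real_inner_comm x' x]
    ring
  have hn2 : ‖x - x'‖^2 = ‖x‖^2 - 2*⟪x', x⟫ + ‖x'‖^2 := by
    rw [← real_inner_self_eq_norm_sq, ← real_inner_self_eq_norm_sq,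
      ← real_inner_self_eq_norm_sq]
    simp only [inner_sub_sub_self, real_inner_comm x' x]
    ring
  rw [hn1] at hconv
  rw [hn2]
  have key : t * ⟪y, x - x'⟫ - ε + ρ/2 * t * (1-t) * (‖x‖^2 - 2*⟪x', x⟫ + ‖x'‖^2)
      ≤ t * (a - a') := by nlinarith [hconv, hsub]
  have h1 : ε / t * t = ε := div_mul_cancel₀ ε ht.ne'
  nlinarith [key, h1, ht]

/-- One step of approximate DCA (`y ∈ ∂_{ε_y} h(x)`, `y ∈ ∂_{ε_x} g(x')`)
on `f = g − h` with `g` proper convex `ρ_g`-strongly convex and `h` finite convex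
`ρ_h`-strongly convex, satisfies for all `t_x, t_y ∈ (0,1]`:
`(g(x) − h(x)) − (g(x') − h(x')) ≥ (ρ̄/2)‖x − x'‖² − ε̄` where
`ρ̄ = ρ_g(1 − t_x) + ρ_h(1 − t_y)` and `ε̄ = ε_x/t_x + ε_y/t_y`. -/
theorem stmt2 {d : ℕ} (g : E d → EReal) (h : E d → ℝ) (ρg ρh : ℝ)
    (hρg : 0 ≤ ρg) (hρh : 0 ≤ ρh)
    (hg_proper : ERealProper g) (hg_convex : ERealConvex g)
    (hg_strong : ERealConvex (fun z => g z - (((ρg / 2) * ‖z‖ ^ 2 : ℝ) : EReal)))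
    (hh_convex : ConvexOn ℝ Set.univ h)
    (hh_strong : ConvexOn ℝ Set.univ (fun z => h z - (ρh / 2) * ‖z‖ ^ 2))
    (εx εy : ℝ) (hεx : 0 ≤ εx) (hεy : 0 ≤ εy)
    (x x' y : E d) (hx : g x ≠ ⊤) (hx' : g x' ≠ ⊤)
    (hy_h : y ∈ epsSubdiff (fun z => ((h z : ℝ) : EReal)) εy x)
    (hy_g : y ∈ epsSubdiff g εx x') :
    ∀ tx ty : ℝ, 0 < tx → tx ≤ 1 → 0 < ty → ty ≤ 1 →
      (((ρg * (1 - tx) + ρh * (1 - ty)) / 2 * ‖x - x'‖ ^ 2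
          - (εx / tx + εy / ty) : ℝ) : EReal) ≤
        (g x - ((h x : ℝ) : EReal)) - (g x' - ((h x' : ℝ) : EReal)) := by
  intro tx ty htx htx1 hty hty1
  obtain ⟨⟨r', hgx'⟩, hsubg⟩ := hy_g
  obtain ⟨-, hsubh⟩ := hy_h
  have hxb : g x ≠ ⊥ := hg_proper.1 x
  set a : ℝ := (g x).toReal with ha
  have hgx : ((a : ℝ) : EReal) = g x := EReal.coe_toReal hx hxb
  -- h-part
  have Hh : ⟪y, x' - x⟫ - εy / ty + ρh / 2 * (1 - ty) * ‖x' - x‖ ^ 2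
      ≤ h x' - h x := by
    refine aux_strong ρh ty εy hty hty1 x' x y (h x') (h x)
      (h ((1 - ty) • x + ty • x')) ?_ ?_
    · have := hh_strong.2 (Set.mem_univ x) (Set.mem_univ x')
        (by linarith : (0:ℝ) ≤ 1 - ty) hty.le (by ring)
      simpa using this
    · have := hsubh ((1 - ty) • x + ty • x')
      simp only at this
      rw [← EReal.coe_add, EReal.coe_le_coe_iff] at this
      exact this
  -- g-part
  set z : E d := (1 - tx) • x' + tx • x with hzdef
  have hlow : ((r' + (⟪y, z - x'⟫ - εx) : ℝ) : EReal) ≤ g z := by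
    have := hsubg z
    rw [hgx'] at this
    rw [EReal.coe_add]
    exact this
  have hstrong := hg_strong x' x tx htx.le htx1
  simp only at hstrong
  rw [hgx', ← hgx] at hstrong
  have hrhs : ((1 - tx : ℝ) : EReal) * (((r' : ℝ) : EReal) - ((ρg / 2 * ‖x'‖ ^ 2 : ℝ) : EReal))
      + ((tx : ℝ) : EReal) * (((a : ℝ) : EReal) - ((ρg / 2 * ‖x‖ ^ 2 : ℝ) : EReal))
      = (((1 - tx) * (r' - ρg / 2 * ‖x'‖ ^ 2) + tx * (a - ρg / 2 * ‖x‖ ^ 2) : ℝ) : EReal) := by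
    rw [← EReal.coe_sub, ← EReal.coe_sub, ← EReal.coe_mul, ← EReal.coe_mul, ← EReal.coe_add]
  rw [hrhs] at hstrong
  have hzt : g z ≠ ⊤ := by
    intro htop
    rw [htop] at hstrong
    rw [EReal.top_sub_coe] at hstrong
    exact (EReal.coe_lt_top _).not_ge hstrong
  have hzb : g z ≠ ⊥ := hg_proper.1 z
  set b : ℝ := (g z).toReal with hb
  have hgz : ((b : ℝ) : EReal) = g z := EReal.coe_toReal hzt hzb
  rw [← hgz, ← EReal.coe_sub, EReal.coe_le_coe_iff] at hstrong
  rw [← hgz, EReal.coe_le_coe_iff] at hlow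
  have Hg : ⟪y, x - x'⟫ - εx / tx + ρg / 2 * (1 - tx) * ‖x - x'‖ ^ 2 ≤ a - r' :=
    aux_strong ρg tx εx htx htx1 x x' y a r' b hstrong hlow
  -- combine
  rw [← hgx, hgx']
  have hrw : (((a : ℝ) : EReal) - ((h x : ℝ) : EReal)) - (((r' : ℝ) : EReal) - ((h x' : ℝ) : EReal))
      = (((a - h x) - (r' - h x') : ℝ) : EReal) := by
    rw [EReal.coe_sub, EReal.coe_sub, EReal.coe_sub]
  rw [hrw, EReal.coe_le_coe_iff]
  have hip : ⟪y, x' - x⟫ = -⟪y, x - x'⟫ := by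
    rw [← inner_neg_right, neg_sub]
  have hnr : ‖x' - x‖ = ‖x - x'‖ := norm_sub_rev _ _
  rw [hip, hnr] at Hh
  nlinarith [Hg, Hh]
end
end

section
/- Let g : ℝ^d → ℝ ∪ {+∞} be proper convex and ρ_g-strongly convex, and h : ℝ^d → ℝ be convex and ρ_h-strongly convex, with ρ_g, ρ_h ≥ 0. Let ε, ε_x, ε_y ≥ 0 and let x ∈ dom g, y ∈ ∂_{ε_y} h(x), and x' ∈ dom g with y ∈ ∂_{ε_x} g(x'). If (g(x) − h(x)) − (g(x') − h(x')) ≤ ε, then, with ε' = ε + ε_x + ε_y: (i) y ∈ ∂_{ε'} g(x) ∩ ∂_{ε_y} h(x); (ii) y ∈ ∂_{ε_x} g(x') ∩ ∂_{ε'} h(x'); and (iii) for all t_x, t_y ∈ (0,1], (ρ_g(1 − t_x) + ρ_h(1 − t_y))/2 · ‖x − x'‖² ≤ ε_x/t_x + ε_y/t_y + ε. -/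
open RealInnerProductSpace

noncomputable section

lemma combo_norm_sq {d : ℕ} (a b : E d) (t : ℝ) :
    ‖(1 - t) • a + t • b‖ ^ 2
      = (1 - t) * ‖a‖ ^ 2 + t * ‖b‖ ^ 2 - t * (1 - t) * ‖a - b‖ ^ 2 := by
  simp only [← real_inner_self_eq_norm_sq, inner_add_left, inner_add_right,
    inner_sub_left, inner_sub_right, real_inner_smul_left, real_inner_smul_right]
  ring

/-- For one step of approximate DCA (`y ∈ ∂_{ε_y} h(x)`, `y ∈ ∂_{ε_x} g(x')`)
on `f = g − h` with `g` proper convex `ρ_g`-strongly convex and `h` finite convex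
`ρ_h`-strongly convex: if `(g(x) − h(x)) − (g(x') − h(x')) ≤ ε`, then with
`ε' = ε + ε_x + ε_y`: (i) `y ∈ ∂_{ε'} g(x) ∩ ∂_{ε_y} h(x)`;
(ii) `y ∈ ∂_{ε_x} g(x') ∩ ∂_{ε'} h(x')`; (iii) for all `t_x, t_y ∈ (0,1]`,
`(ρ_g(1 − t_x) + ρ_h(1 − t_y))/2 · ‖x − x'‖² ≤ ε_x/t_x + ε_y/t_y + ε`. -/
theorem stmt3 {d : ℕ} (g : E d → EReal) (h : E d → ℝ) (ρg ρh : ℝ)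
    (hρg : 0 ≤ ρg) (hρh : 0 ≤ ρh)
    (hg_proper : ERealProper g) (hg_convex : ERealConvex g)
    (hg_strong : ERealConvex (fun z => g z - (((ρg / 2) * ‖z‖ ^ 2 : ℝ) : EReal)))
    (hh_convex : ConvexOn ℝ Set.univ h)
    (hh_strong : ConvexOn ℝ Set.univ (fun z => h z - (ρh / 2) * ‖z‖ ^ 2))
    (ε εx εy : ℝ) (hε : 0 ≤ ε) (hεx : 0 ≤ εx) (hεy : 0 ≤ εy)
    (x x' y : E d) (hx : g x ≠ ⊤) (hx' : g x' ≠ ⊤)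
    (hy_h : y ∈ epsSubdiff (fun z => ((h z : ℝ) : EReal)) εy x)
    (hy_g : y ∈ epsSubdiff g εx x')
    (hdec : (g x - ((h x : ℝ) : EReal)) - (g x' - ((h x' : ℝ) : EReal)) ≤ (ε : EReal)) :
    (y ∈ epsSubdiff g (ε + εx + εy) x ∩
        epsSubdiff (fun z => ((h z : ℝ) : EReal)) εy x) ∧
    (y ∈ epsSubdiff g εx x' ∩
        epsSubdiff (fun z => ((h z : ℝ) : EReal)) (ε + εx + εy) x') ∧
    (∀ tx ty : ℝ, 0 < tx → tx ≤ 1 → 0 < ty → ty ≤ 1 →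
      (ρg * (1 - tx) + ρh * (1 - ty)) / 2 * ‖x - x'‖ ^ 2 ≤ εx / tx + εy / ty + ε) := by
  have hg_bot := hg_proper.1
  obtain ⟨-, hh_sub⟩ := hy_h
  obtain ⟨⟨rx', hgx'⟩, hg_sub⟩ := hy_g
  obtain ⟨rx, hgx⟩ : ∃ r : ℝ, g x = (r : EReal) :=
    ⟨(g x).toReal, (EReal.coe_toReal hx (hg_bot x)).symm⟩
  -- real versions of the subgradient inequalities
  have hhR : ∀ z : E d, h x + (⟪y, z - x⟫ - εy) ≤ h z := by
    intro z
    have := hh_sub z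
    simp only at this
    exact_mod_cast this
  have hgR : ∀ z : E d, ∀ r : ℝ, g z = (r : EReal) → rx' + (⟪y, z - x'⟫ - εx) ≤ r := by
    intro z r hz
    have := hg_sub z
    rw [hgx', hz] at this
    exact_mod_cast this
  have hdecR : rx - h x - (rx' - h x') ≤ ε := by
    rw [hgx, hgx'] at hdec
    exact_mod_cast hdec
  have hxx' : h x + (⟪y, x' - x⟫ - εy) ≤ h x' := hhR x'
  have hgxx : rx' + (⟪y, x - x'⟫ - εx) ≤ rx := hgR x rx hgx
  refine ⟨⟨⟨⟨rx, hgx⟩, ?_⟩, ⟨⟨h x, rfl⟩, hh_sub⟩⟩, ⟨⟨⟨rx', hgx'⟩, hg_sub⟩, ⟨h x', rfl⟩, ?_⟩, ?_⟩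
  · -- (i): y ∈ ∂_{ε'} g(x)
    intro z
    rcases eq_or_ne (g z) ⊤ with hz | hz
    · rw [hz]; exact le_top
    · obtain ⟨rz, hgz⟩ : ∃ r : ℝ, g z = (r : EReal) :=
        ⟨(g z).toReal, (EReal.coe_toReal hz (hg_bot z)).symm⟩
      rw [hgx, hgz, ← EReal.coe_add, EReal.coe_le_coe_iff]
      have h1 := hgR z rz hgz
      simp only [inner_sub_right] at h1 hxx' hgxx ⊢
      linarith
  · -- (ii): y ∈ ∂_{ε'} h(x')
    intro z
    show ((h x' : ℝ) : EReal) + _ ≤ ((h z : ℝ) : EReal)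
    rw [← EReal.coe_add, EReal.coe_le_coe_iff]
    have h1 := hhR z
    simp only [inner_sub_right] at h1 hxx' hgxx ⊢
    linarith
  · -- (iii)
    intro tx ty htx0 htx1 hty0 hty1
    set D := ‖x - x'‖ ^ 2 with hD
    have hD' : ‖x' - x‖ ^ 2 = D := by rw [hD, norm_sub_rev]
    -- strong convexity of g between x' and x
    have hgs := hg_strong x' x tx htx0.le htx1
    simp only at hgs
    set w : E d := (1 - tx) • x' + tx • x with hw
    rw [hgx, hgx'] at hgs
    have hwt : g w ≠ ⊤ := by
      intro hT
      rw [hT] at hgs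
      rw [EReal.top_sub_coe] at hgs
      have : ((1 - tx : ℝ) : EReal) * ((rx' : EReal) - ((ρg / 2 * ‖x'‖ ^ 2 : ℝ) : EReal))
          + (tx : EReal) * ((rx : EReal) - ((ρg / 2 * ‖x‖ ^ 2 : ℝ) : EReal))
          = (((1 - tx) * (rx' - ρg / 2 * ‖x'‖ ^ 2) + tx * (rx - ρg / 2 * ‖x‖ ^ 2) : ℝ) : EReal) := by
        norm_cast
      rw [this] at hgs
      exact (EReal.coe_lt_top _).not_ge hgs
    obtain ⟨rw', hgw⟩ : ∃ r : ℝ, g w = (r : EReal) :=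
      ⟨(g w).toReal, (EReal.coe_toReal hwt (hg_bot w)).symm⟩
    rw [hgw] at hgs
    have hgsR : rw' - ρg / 2 * ‖w‖ ^ 2
        ≤ (1 - tx) * (rx' - ρg / 2 * ‖x'‖ ^ 2) + tx * (rx - ρg / 2 * ‖x‖ ^ 2) := by
      exact_mod_cast hgs
    have hwsub : w - x' = tx • (x - x') := by rw [hw]; module
    have hB := hgR w rw' hgw
    rw [hwsub, real_inner_smul_right] at hB
    have hnw : ‖w‖ ^ 2 = (1 - tx) * ‖x'‖ ^ 2 + tx * ‖x‖ ^ 2 - tx * (1 - tx) * D := by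
      rw [hw, combo_norm_sq, hD']
    rw [hnw] at hgsR
    have hG : ρg / 2 * (1 - tx) * D - (rx - rx' - ⟪y, x - x'⟫) ≤ εx / tx := by
      rw [le_div_iff₀ htx0]
      nlinarith [hgsR, hB]
    -- strong convexity of h between x and x'
    have hhs := hh_strong.2 (Set.mem_univ x) (Set.mem_univ x')
      (by linarith : (0:ℝ) ≤ 1 - ty) hty0.le (by ring)
    simp only [smul_eq_mul] at hhs
    set w2 : E d := (1 - ty) • x + ty • x' with hw2
    have hw2sub : w2 - x = ty • (x' - x) := by rw [hw2]; module
    have hB2 := hhR w2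
    rw [hw2sub, real_inner_smul_right] at hB2
    have hnw2 : ‖w2‖ ^ 2 = (1 - ty) * ‖x‖ ^ 2 + ty * ‖x'‖ ^ 2 - ty * (1 - ty) * D := by
      rw [hw2, combo_norm_sq, hD]
    rw [hnw2] at hhs
    have hH : ρh / 2 * (1 - ty) * D - (h x' - h x - ⟪y, x' - x⟫) ≤ εy / ty := by
      rw [le_div_iff₀ hty0]
      nlinarith [hhs, hB2]
    have hip : ⟪y, x' - x⟫ = -⟪y, x - x'⟫ := by
      simp only [inner_sub_right]; ring
    rw [hip] at hH
    linarith [hG, hH, hdecR]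
end
end

section
/- Let g : ℝ^d → ℝ ∪ {+∞} be proper convex and ρ_g-strongly convex, and h : ℝ^d → ℝ be convex and ρ_h-strongly convex, with ρ_g + ρ_h > 0. Let f = g − h, let ε_x, ε_y ≥ 0, and let {x^k} ⊆ dom g, {y^k} be sequences with y^k ∈ ∂_{ε_y} h(x^k) and y^k ∈ ∂_{ε_x} g(x^{k+1}) for all k. Suppose f(x) ≥ f⋆ for all x ∈ dom g, with f⋆ ∈ ℝ. Then for all t_x, t_y ∈ (0,1] with ρ̄ = ρ_g(1 − t_x) + ρ_h(1 − t_y) > 0 and ε̄ = ε_x/t_x + ε_y/t_y, and every K ≥ 1: min_{0 ≤ k ≤ K−1} ‖x^k − x^{k+1}‖ ≤ sqrt( (2/ρ̄) · ( (f(x^0) − f⋆)/K + ε̄ ) ). -/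
open RealInnerProductSpace

noncomputable section

lemma norm_combo {d : ℕ} (u v : E d) (t : ℝ) :
    ‖(1-t)•u + t•v‖^2 = (1-t)*‖u‖^2 + t*‖v‖^2 - t*(1-t)*‖u-v‖^2 := by
  have e : ∀ a : E d, ‖a‖^2 = ⟪a,a⟫ := fun a => (real_inner_self_eq_norm_sq a).symm
  rw [e, e, e, e]
  simp only [inner_add_add_self, inner_sub_sub_self, real_inner_smul_left,
    real_inner_smul_right]
  ring

/-- Descent property for the strongly-convex real-valued part `h`. -/
lemma h_step {d : ℕ} (h : E d → ℝ) (ρh : ℝ)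
    (hh_strong : ConvexOn ℝ Set.univ (fun z => h z - (ρh / 2) * ‖z‖ ^ 2))
    (εy : ℝ) (u v yk : E d) (ty : ℝ) (hty : 0 < ty) (hty1 : ty ≤ 1)
    (hsub : ∀ z : E d, ((h u : ℝ) : EReal) + ((⟪yk, z - u⟫ - εy : ℝ) : EReal)
      ≤ ((h z : ℝ) : EReal)) :
    h u + ⟪yk, v - u⟫ - εy / ty ≤ h v - ρh * (1 - ty) / 2 * ‖u - v‖ ^ 2 := by
  set w : E d := (1 - ty) • u + ty • v with hw
  have hsub' := hsub w
  rw [← EReal.coe_add, EReal.coe_le_coe_iff] at hsub'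
  have hwu : w - u = ty • (v - u) := by rw [hw]; module
  rw [hwu, real_inner_smul_right] at hsub'
  have hconv := hh_strong.2 (Set.mem_univ u) (Set.mem_univ v)
    (by linarith : (0:ℝ) ≤ 1 - ty) hty.le (by ring)
  simp only [smul_eq_mul] at hconv
  have hnc := norm_combo u v ty
  rw [← hw] at hconv hnc
  rw [hnc] at hconv
  have key : (h u + ⟪yk, v - u⟫ - h v + ρh * (1 - ty) / 2 * ‖u - v‖ ^ 2) * ty ≤ εy := by
    nlinarith [hconv, hsub']
  have h2 : h u + ⟪yk, v - u⟫ - h v + ρh * (1 - ty) / 2 * ‖u - v‖ ^ 2 ≤ εy / ty :=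
    (le_div_iff₀ hty).mpr key
  linarith

/-- Descent property for the strongly-convex `EReal`-valued part `g`. -/
lemma g_step {d : ℕ} (g : E d → EReal) (ρg : ℝ)
    (hg_proper : ERealProper g)
    (hg_strong : ERealConvex (fun z => g z - (((ρg / 2) * ‖z‖ ^ 2 : ℝ) : EReal)))
    (εx : ℝ) (u v yk : E d) (tx : ℝ) (htx : 0 < tx) (htx1 : tx ≤ 1)
    (Gu Gv : ℝ) (hGu : g u = (Gu : EReal)) (hGv : g v = (Gv : EReal))
    (hsub : ∀ z : E d, g u + ((⟪yk, z - u⟫ - εx : ℝ) : EReal) ≤ g z) :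
    Gu + ⟪yk, v - u⟫ - εx / tx ≤ Gv - ρg * (1 - tx) / 2 * ‖u - v‖ ^ 2 := by
  set w : E d := (1 - tx) • u + tx • v with hw
  have hconv := hg_strong u v tx htx.le htx1
  rw [← hw] at hconv
  simp only [hGu, hGv] at hconv
  have hrhs : ((1 - tx : ℝ) : EReal) * ((Gu : EReal) - (((ρg / 2) * ‖u‖ ^ 2 : ℝ) : EReal))
      + (tx : EReal) * ((Gv : EReal) - (((ρg / 2) * ‖v‖ ^ 2 : ℝ) : EReal))
      = (((1 - tx) * (Gu - (ρg / 2) * ‖u‖ ^ 2) + tx * (Gv - (ρg / 2) * ‖v‖ ^ 2) : ℝ) : EReal) := by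
    rw [← EReal.coe_sub, ← EReal.coe_sub, ← EReal.coe_mul, ← EReal.coe_mul, ← EReal.coe_add]
  rw [hrhs] at hconv
  have hwtop : g w ≠ ⊤ := by
    intro htop
    rw [htop, EReal.top_sub_coe] at hconv
    exact (EReal.coe_lt_top _).not_ge hconv
  have hwbot : g w ≠ ⊥ := hg_proper.1 w
  set r : ℝ := (g w).toReal with hr
  have hgw : g w = (r : EReal) := (EReal.coe_toReal hwtop hwbot).symm
  rw [hgw, ← EReal.coe_sub, EReal.coe_le_coe_iff] at hconv
  have hsub' := hsub w
  rw [hgw, hGu, ← EReal.coe_add, EReal.coe_le_coe_iff] at hsub'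
  have hwu : w - u = tx • (v - u) := by rw [hw]; module
  rw [hwu, real_inner_smul_right] at hsub'
  have hnc := norm_combo u v tx
  rw [← hw] at hnc
  rw [hnc] at hconv
  have key : (Gu + ⟪yk, v - u⟫ - Gv + ρg * (1 - tx) / 2 * ‖u - v‖ ^ 2) * tx ≤ εx := by
    nlinarith [hconv, hsub']
  have h2 : Gu + ⟪yk, v - u⟫ - Gv + ρg * (1 - tx) / 2 * ‖u - v‖ ^ 2 ≤ εx / tx :=
    (le_div_iff₀ htx).mpr key
  linarith

/-- For the approximate-DCA iterates `x^k ∈ dom g`, `y^k ∈ ∂_{ε_y} h(x^k)`,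
`y^k ∈ ∂_{ε_x} g(x^{k+1})` on `f = g − h` with `g` proper convex `ρ_g`-strongly convex,
`h` finite convex `ρ_h`-strongly convex, `ρ_g + ρ_h > 0`, and `f ≥ f⋆` on `dom g`
(here `f(x^0) = f0 ∈ ℝ`): for all `t_x, t_y ∈ (0,1]` with
`ρ̄ = ρ_g(1 − t_x) + ρ_h(1 − t_y) > 0`, `ε̄ = ε_x/t_x + ε_y/t_y`, and every `K ≥ 1`,
`min_{0 ≤ k ≤ K−1} ‖x^k − x^{k+1}‖ ≤ sqrt((2/ρ̄)((f(x^0) − f⋆)/K + ε̄))`. -/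
theorem stmt5 {d : ℕ} (g : E d → EReal) (h : E d → ℝ) (ρg ρh : ℝ)
    (hρg : 0 ≤ ρg) (hρh : 0 ≤ ρh) (hρ : 0 < ρg + ρh)
    (hg_proper : ERealProper g) (hg_convex : ERealConvex g)
    (hg_strong : ERealConvex (fun z => g z - (((ρg / 2) * ‖z‖ ^ 2 : ℝ) : EReal)))
    (hh_convex : ConvexOn ℝ Set.univ h)
    (hh_strong : ConvexOn ℝ Set.univ (fun z => h z - (ρh / 2) * ‖z‖ ^ 2))
    (εx εy : ℝ) (hεx : 0 ≤ εx) (hεy : 0 ≤ εy)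
    (x : ℕ → E d) (y : ℕ → E d)
    (hxdom : ∀ k, g (x k) ≠ ⊤)
    (hy_h : ∀ k, y k ∈ epsSubdiff (fun z => ((h z : ℝ) : EReal)) εy (x k))
    (hy_g : ∀ k, y k ∈ epsSubdiff g εx (x (k + 1)))
    (fstar : ℝ)
    (hbound : ∀ z : E d, g z ≠ ⊤ → (fstar : EReal) ≤ g z - ((h z : ℝ) : EReal))
    (f0 : ℝ) (hf0 : g (x 0) - ((h (x 0) : ℝ) : EReal) = (f0 : EReal)) :
    ∀ tx ty : ℝ, 0 < tx → tx ≤ 1 → 0 < ty → ty ≤ 1 →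
      0 < ρg * (1 - tx) + ρh * (1 - ty) →
      ∀ K : ℕ, 1 ≤ K →
        ∃ k < K, ‖x k - x (k + 1)‖ ≤
          Real.sqrt ((2 / (ρg * (1 - tx) + ρh * (1 - ty))) *
            ((f0 - fstar) / K + (εx / tx + εy / ty))) := by
  intro tx ty htx htx1 hty hty1 hρbar K hK
  set ρb : ℝ := ρg * (1 - tx) + ρh * (1 - ty) with hρb
  set εb : ℝ := εx / tx + εy / ty with hεb
  -- finiteness of g on iterates
  set G : ℕ → ℝ := fun k => (g (x k)).toReal with hG
  have hGk : ∀ k, g (x k) = ((G k : ℝ) : EReal) := fun k =>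
    (EReal.coe_toReal (hxdom k) (hg_proper.1 (x k))).symm
  set F : ℕ → ℝ := fun k => G k - h (x k) with hF
  -- per-step descent
  have hstep : ∀ k : ℕ, ρb / 2 * ‖x k - x (k+1)‖ ^ 2 - εb ≤ F k - F (k+1) := by
    intro k
    have hA := g_step g ρg hg_proper hg_strong εx (x (k+1)) (x k) (y k) tx htx htx1
      (G (k+1)) (G k) (hGk (k+1)) (hGk k) (hy_g k).2
    have hB := h_step h ρh hh_strong εy (x k) (x (k+1)) (y k) ty hty hty1 (hy_h k).2
    have hsym : ‖x (k+1) - x k‖ = ‖x k - x (k+1)‖ := norm_sub_rev _ _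
    have hin : ⟪y k, x k - x (k+1)⟫ = - ⟪y k, x (k+1) - x k⟫ := by
      rw [← inner_neg_right]; congr 1; abel
    rw [hsym] at hA
    rw [hin] at hA
    simp only [hF, hρb, hεb]
    nlinarith [sq_nonneg ‖x k - x (k+1)‖]
  -- lower bound on F K
  have hFK : fstar ≤ F K := by
    have hb := hbound (x K) (hxdom K)
    rw [hGk K, ← EReal.coe_sub, EReal.coe_le_coe_iff] at hb
    exact hb
  -- F 0 = f0
  have hF0 : F 0 = f0 := by
    have := hf0
    rw [hGk 0, ← EReal.coe_sub, EReal.coe_eq_coe_iff] at this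
    exact this
  clear_value F G
  -- telescoping sum
  have htel : ∀ n : ℕ, F n + ∑ k ∈ Finset.range n, (ρb / 2 * ‖x k - x (k+1)‖ ^ 2 - εb) ≤ F 0 := by
    intro n
    induction n with
    | zero => simp
    | succ n ih =>
      rw [Finset.sum_range_succ]
      have := hstep n
      linarith
  have hsum : ∑ k ∈ Finset.range K, (ρb / 2 * ‖x k - x (k+1)‖ ^ 2 - εb) ≤ f0 - fstar := by
    have := htel K
    linarith
  -- pick the minimizing index
  obtain ⟨k0, hk0mem, hk0min⟩ := Finset.exists_min_image (Finset.range K)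
    (fun k => ‖x k - x (k+1)‖) ⟨0, Finset.mem_range.mpr hK⟩
  refine ⟨k0, Finset.mem_range.mp hk0mem, ?_⟩
  have hKpos : (0:ℝ) < (K:ℝ) := by exact_mod_cast hK
  -- K * (per-term lower bound) ≤ sum
  have hcard : (K:ℝ) * (ρb / 2 * ‖x k0 - x (k0+1)‖ ^ 2 - εb)
      ≤ ∑ k ∈ Finset.range K, (ρb / 2 * ‖x k - x (k+1)‖ ^ 2 - εb) := by
    have hle : ∀ k ∈ Finset.range K,
        ρb / 2 * ‖x k0 - x (k0+1)‖ ^ 2 - εb ≤ ρb / 2 * ‖x k - x (k+1)‖ ^ 2 - εb := by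
      intro k hk
      have h1 : ‖x k0 - x (k0+1)‖ ≤ ‖x k - x (k+1)‖ := hk0min k hk
      have h2 : ‖x k0 - x (k0+1)‖ ^ 2 ≤ ‖x k - x (k+1)‖ ^ 2 := by
        nlinarith [norm_nonneg (x k0 - x (k0+1))]
      nlinarith
    calc (K:ℝ) * (ρb / 2 * ‖x k0 - x (k0+1)‖ ^ 2 - εb)
        = ∑ _k ∈ Finset.range K, (ρb / 2 * ‖x k0 - x (k0+1)‖ ^ 2 - εb) := by
          rw [Finset.sum_const, Finset.card_range, nsmul_eq_mul]
      _ ≤ _ := Finset.sum_le_sum hle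
  have hm2 : ‖x k0 - x (k0+1)‖ ^ 2 ≤ (2 / ρb) * ((f0 - fstar) / K + εb) := by
    have h1 : (K:ℝ) * (ρb / 2 * ‖x k0 - x (k0+1)‖ ^ 2 - εb) ≤ f0 - fstar :=
      le_trans hcard hsum
    have h2 : ρb / 2 * ‖x k0 - x (k0+1)‖ ^ 2 - εb ≤ (f0 - fstar) / K := by
      rw [le_div_iff₀ hKpos]
      nlinarith [h1]
    have h3 : ρb / 2 * ‖x k0 - x (k0+1)‖ ^ 2 ≤ (f0 - fstar) / K + εb := by linarith
    have h4 : ‖x k0 - x (k0+1)‖ ^ 2 = (2 / ρb) * (ρb / 2 * ‖x k0 - x (k0+1)‖ ^ 2) := by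
      field_simp
    rw [h4]
    exact mul_le_mul_of_nonneg_left h3 (by positivity)
  exact (Real.le_sqrt (norm_nonneg _) (le_trans (sq_nonneg _) hm2)).mpr hm2
end
end

section
/- Let Φ : ℝ^d → ℝ ∪ {+∞} be a proper ρ-strongly convex function with ρ ≥ 0. Then for any ε ≥ 0, t ∈ (0,1], x ∈ dom Φ, and y ∈ ∂_ε Φ(x), one has Φ(z) ≥ Φ(x) + ⟨y, z − x⟩ + (ρ(1 − t)/2)‖z − x‖² − ε/t for all z ∈ ℝ^d. -/
open RealInnerProductSpace

noncomputable section

/-- If `Φ` is proper and `ρ`-strongly convex (`ρ ≥ 0`), then for any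
`ε ≥ 0`, `t ∈ (0,1]`, `x ∈ dom Φ` and `y ∈ ∂_ε Φ(x)`, one has
`Φ(z) ≥ Φ(x) + ⟨y, z − x⟩ + (ρ(1 − t)/2)‖z − x‖² − ε/t` for all `z`. -/
theorem stmt6 {d : ℕ} (Φ : E d → EReal) (ρ : ℝ) (hρ : 0 ≤ ρ)
    (hproper : ERealProper Φ)
    (hstrong : ERealConvex (fun z => Φ z - (((ρ / 2) * ‖z‖ ^ 2 : ℝ) : EReal)))
    (ε : ℝ) (hε : 0 ≤ ε) (t : ℝ) (ht0 : 0 < t) (ht1 : t ≤ 1)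
    (x : E d) (hx : Φ x ≠ ⊤) (y : E d) (hy : y ∈ epsSubdiff Φ ε x) :
    ∀ z : E d,
      Φ x + ((⟪y, z - x⟫ + ρ * (1 - t) / 2 * ‖z - x‖ ^ 2 - ε / t : ℝ) : EReal) ≤ Φ z := by
  obtain ⟨⟨r, hr⟩, hsub⟩ := hy
  intro z
  by_cases hzt : Φ z = ⊤
  · rw [hzt]; exact le_top
  set s : ℝ := (Φ z).toReal with hs_def
  have hs : Φ z = (s : EReal) := (EReal.coe_toReal hzt (hproper.1 z)).symm
  -- the intermediate point
  set w : E d := (1 - t) • x + t • z with hw_def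
  have hconv := hstrong x z t ht0.le ht1
  simp only at hconv
  rw [hr, hs] at hconv
  -- Φ w is finite
  have hwt : Φ w ≠ ⊤ := by
    intro h
    rw [← hw_def] at hconv
    rw [h] at hconv
    rw [show ((⊤ : EReal) - (((ρ / 2) * ‖w‖ ^ 2 : ℝ) : EReal)) = ⊤ from
      EReal.top_sub_coe _] at hconv
    rw [← EReal.coe_sub, ← EReal.coe_sub, ← EReal.coe_mul, ← EReal.coe_mul,
      ← EReal.coe_add] at hconv
    exact EReal.coe_ne_top _ (top_le_iff.mp hconv)
  set u : ℝ := (Φ w).toReal with hu_def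
  have hu : Φ w = (u : EReal) := (EReal.coe_toReal hwt (hproper.1 w)).symm
  rw [← hw_def, hu] at hconv
  rw [← EReal.coe_sub, ← EReal.coe_sub, ← EReal.coe_sub, ← EReal.coe_mul,
    ← EReal.coe_mul, ← EReal.coe_add, EReal.coe_le_coe_iff] at hconv
  -- subgradient inequality at w
  have hsubw := hsub w
  rw [hr, hu, ← EReal.coe_add, EReal.coe_le_coe_iff] at hsubw
  -- inner product identity
  have hwx : w - x = t • (z - x) := by
    rw [hw_def]
    module
  have hinner : ⟪y, w - x⟫ = t * ⟪y, z - x⟫ := by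
    rw [hwx, real_inner_smul_right]
  rw [hinner] at hsubw
  -- norm identity
  have hxv : z = x + (z - x) := by abel
  have hwv : w = x + t • (z - x) := by rw [hw_def]; module
  have hnz : ‖z‖ ^ 2 = ‖x‖ ^ 2 + 2 * ⟪x, z - x⟫ + ‖z - x‖ ^ 2 := by
    conv_lhs => rw [hxv]
    rw [norm_add_sq_real]
  have hnw : ‖w‖ ^ 2 = ‖x‖ ^ 2 + 2 * (t * ⟪x, z - x⟫) + t ^ 2 * ‖z - x‖ ^ 2 := by
    rw [hwv, norm_add_sq_real, real_inner_smul_right, norm_smul]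
    simp only [mul_pow, Real.norm_eq_abs, sq_abs]
    try ring
  -- conclude in ℝ
  rw [hr, hs, ← EReal.coe_add, EReal.coe_le_coe_iff]
  rw [← sub_nonneg]
  have hconv2 : u ≤ (1 - t) * r + t * s - ρ / 2 * (t * (1 - t)) * ‖z - x‖ ^ 2 := by
    rw [hnz, hnw] at hconv
    nlinarith [hconv]
  have key : 0 ≤ t * (s - (r + (⟪y, z - x⟫ + ρ * (1 - t) / 2 * ‖z - x‖ ^ 2 - ε / t))) := by
    have hεt : t * (ε / t) = ε := mul_div_cancel₀ ε (ne_of_gt ht0)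
    nlinarith [hconv2, hsubw, hεt]
  exact (mul_nonneg_iff_of_pos_left ht0).mp key
end
end

section
/- Let Φ : ℝ^d → ℝ ∪ {+∞} be a proper convex function whose domain has diameter at most D, i.e., ‖x − z‖ ≤ D for all x, z ∈ dom Φ. Let ρ ≥ 0 and Φ̃ = Φ + (ρ/2)‖·‖². Then for any ε ≥ 0, x ∈ dom Φ, and y ∈ ∂_ε Φ̃(x), one has y − ρx ∈ ∂_{ε'} Φ(x), where ε' = D·sqrt(2ρε) if ε ≤ ρD²/2, and ε' = ρD²/2 + ε otherwise. -/
open RealInnerProductSpace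

noncomputable section

/-!
Test the ε-subgradient inequality of `Φ̃` at the point `x + t • (z - x)` of the segment towards
`z`. Convexity of `Φ` and the expansion of the square give
`t ⟪y - ρ x, z - x⟫ ≤ t (Φ z - Φ x) + ε + (ρ D² / 2) t²` for all `t ∈ (0, 1]`, and optimizing over
`t` (at `t = √(2ε / (ρ D²))` when this is at most `1`, at `t = 1` otherwise) yields `ε'`.
-/

lemma EReal.eq_coe_of_add_coe_eq_coe {a : EReal} {c r : ℝ} (h : a + c = r) : a = (r - c : ℝ) := by
  induction a with
  | bot => simp at h
  | top => simp at h
  | coe a => norm_cast at h ⊢; linarith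

lemma nonpos_of_forall_mul_le_mul_sq {C K : ℝ} (hK : 0 ≤ K)
    (h : ∀ t : ℝ, 0 < t → t ≤ 1 → t * C ≤ K * t ^ 2) : C ≤ 0 := by
  by_contra! hC
  have hKC : 0 < K + C := by linarith
  -- at `t = C / (K + C)` the hypothesis reads `C ≤ K C / (K + C) < C`
  have ht := h (C / (K + C)) (by positivity) ((div_le_one hKC).2 (by linarith))
  field_simp at ht
  nlinarith

lemma le_two_mul_sqrt_mul_of_forall_mul_le {C ε K : ℝ} (hε : 0 < ε) (hεK : ε ≤ K)
    (h : ∀ t : ℝ, 0 < t → t ≤ 1 → t * C ≤ ε + K * t ^ 2) : C ≤ 2 * √(ε * K) := by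
  have hK : 0 < K := hε.trans_le hεK
  set t := √(ε / K)
  have ht : 0 < t := Real.sqrt_pos.2 (by positivity)
  have hKt : K * t ^ 2 = ε := by
    rw [Real.sq_sqrt (by positivity)]; field_simp
  have htS : t * (2 * √(ε * K)) = 2 * ε := by
    have : ε / K * (ε * K) = ε ^ 2 := by field_simp
    rw [mul_left_comm, ← Real.sqrt_mul (by positivity), this, Real.sqrt_sq hε.le]
  have := h t ht (Real.sqrt_le_one.2 ((div_le_one hK).2 hεK))
  exact le_of_mul_le_mul_left (by linarith) ht

lemma le_ite_of_forall_mul_le_add_mul_sq {C ε K : ℝ} (hε : 0 ≤ ε) (hK : 0 ≤ K)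
    (h : ∀ t : ℝ, 0 < t → t ≤ 1 → t * C ≤ ε + K * t ^ 2) :
    C ≤ if ε ≤ K then 2 * √(ε * K) else K + ε := by
  split_ifs with hεK
  · rcases hε.eq_or_lt with rfl | hε
    · simpa using nonpos_of_forall_mul_le_mul_sq hK (by simpa using h)
    · exact le_two_mul_sqrt_mul_of_forall_mul_le hε hεK h
  · linarith [h 1 one_pos le_rfl]

section

variable {d : ℕ} {Φ : E d → EReal}

lemma ERealConvex.le_add_smul_sub (hconvex : ERealConvex Φ) {x z : E d} {px pz : ℝ}
    (hx : Φ x = px) (hz : Φ z = pz) {t : ℝ} (ht₀ : 0 ≤ t) (ht₁ : t ≤ 1) :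
    Φ (x + t • (z - x)) ≤ (((1 - t) * px + t * pz : ℝ) : EReal) := by
  have h := hconvex x z t ht₀ ht₁
  rw [hx, hz] at h
  convert h using 1
  · congr 1; module
  · norm_cast

lemma mul_inner_sub_smul_le_of_mem_epsSubdiff (hconvex : ERealConvex Φ) {ρ ε : ℝ} {x y z : E d}
    {px pz : ℝ} (hx : Φ x = px) (hz : Φ z = pz)
    (hy : y ∈ epsSubdiff (fun w => Φ w + (((ρ / 2) * ‖w‖ ^ 2 : ℝ) : EReal)) ε x)
    {t : ℝ} (ht₀ : 0 ≤ t) (ht₁ : t ≤ 1) :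
    t * ⟪y - ρ • x, z - x⟫ ≤ t * (pz - px) + ε + ρ / 2 * ‖z - x‖ ^ 2 * t ^ 2 := by
  set w := x + t • (z - x)
  have hsub := hy.2 w
  have hseg := add_le_add_left (hconvex.le_add_smul_sub hx hz ht₀ ht₁)
    (((ρ / 2) * ‖w‖ ^ 2 : ℝ) : EReal)
  have hreal : px + ρ / 2 * ‖x‖ ^ 2 + (⟪y, w - x⟫ - ε)
      ≤ (1 - t) * px + t * pz + ρ / 2 * ‖w‖ ^ 2 := by
    simp only [hx] at hsub
    exact_mod_cast hsub.trans hseg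
  have hwx : w - x = t • (z - x) := by simp [w]
  have hw : ‖w‖ ^ 2 = ‖x‖ ^ 2 + 2 * (t * ⟪x, z - x⟫) + t ^ 2 * ‖z - x‖ ^ 2 := by
    rw [norm_add_sq_real, real_inner_smul_right, norm_smul, Real.norm_eq_abs, mul_pow, sq_abs]
  rw [hwx, real_inner_smul_right, hw] at hreal
  rw [inner_sub_left, real_inner_smul_left]
  linarith

end

theorem stmt8_general {d : ℕ} (Φ : E d → EReal)
    (hproper : ERealProper Φ) (hconvex : ERealConvex Φ)
    (D : ℝ) (hD : ∀ x z : E d, Φ x ≠ ⊤ → Φ z ≠ ⊤ → ‖x - z‖ ≤ D)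
    (ρ : ℝ) (hρ : 0 ≤ ρ) (ε : ℝ) (hε : 0 ≤ ε)
    (x : E d) (y : E d)
    (hy : y ∈ epsSubdiff (fun z => Φ z + (((ρ / 2) * ‖z‖ ^ 2 : ℝ) : EReal)) ε x) :
    y - ρ • x ∈ epsSubdiff Φ
      (if ε ≤ ρ * D ^ 2 / 2 then D * Real.sqrt (2 * ρ * ε) else ρ * D ^ 2 / 2 + ε) x := by
  obtain ⟨r, hr⟩ := hy.1
  set px := r - ρ / 2 * ‖x‖ ^ 2
  have hpx : Φ x = px := EReal.eq_coe_of_add_coe_eq_coe hr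
  have hx : Φ x ≠ ⊤ := hpx ▸ EReal.coe_ne_top px
  refine ⟨⟨px, hpx⟩, fun z => ?_⟩
  rcases eq_or_ne (Φ z) ⊤ with hz | hz
  · simp [hz]
  obtain ⟨pz, hpz⟩ : ∃ pz : ℝ, Φ z = pz := ⟨_, (EReal.coe_toReal hz (hproper.1 z)).symm⟩
  have hdist : ‖z - x‖ ^ 2 ≤ D ^ 2 := pow_le_pow_left₀ (norm_nonneg _) (hD z x hz hx) 2
  have hbound : ∀ t : ℝ, 0 < t → t ≤ 1 →
      t * (⟪y - ρ • x, z - x⟫ - (pz - px)) ≤ ε + ρ * D ^ 2 / 2 * t ^ 2 := fun t ht₀ ht₁ => by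
    have := mul_inner_sub_smul_le_of_mem_epsSubdiff hconvex hpx hpz hy ht₀.le ht₁
    have := mul_le_mul_of_nonneg_left hdist (by positivity : 0 ≤ ρ / 2 * t ^ 2)
    linarith
  have hsqrt : D * √(2 * ρ * ε) = 2 * √(ε * (ρ * D ^ 2 / 2)) := by
    have hD₀ : 0 ≤ D := (norm_nonneg _).trans (hD x x hx hx)
    rw [show ε * (ρ * D ^ 2 / 2) = (D / 2) ^ 2 * (2 * ρ * ε) by ring,
      Real.sqrt_mul (sq_nonneg _), Real.sqrt_sq (by positivity)]
    ring
  have hC := le_ite_of_forall_mul_le_add_mul_sq hε (by positivity) hbound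
  rw [← hsqrt] at hC
  rw [hpx, hpz]
  exact_mod_cast (by linarith : px + (⟪y - ρ • x, z - x⟫ - _) ≤ pz)

/-- Let `Φ` be proper convex with domain of diameter at most `D`,
`ρ ≥ 0`, and `Φ̃ = Φ + (ρ/2)‖·‖²`. For any `ε ≥ 0`, `x ∈ dom Φ` and `y ∈ ∂_ε Φ̃(x)`,
one has `y − ρx ∈ ∂_{ε'} Φ(x)`, where `ε' = D√(2ρε)` if `ε ≤ ρD²/2` and
`ε' = ρD²/2 + ε` otherwise. -/
theorem stmt8 {d : ℕ} (Φ : E d → EReal)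
    (hproper : ERealProper Φ) (hconvex : ERealConvex Φ)
    (D : ℝ) (hD : ∀ x z : E d, Φ x ≠ ⊤ → Φ z ≠ ⊤ → ‖x - z‖ ≤ D)
    (ρ : ℝ) (hρ : 0 ≤ ρ) (ε : ℝ) (hε : 0 ≤ ε)
    (x : E d) (hx : Φ x ≠ ⊤) (y : E d)
    (hy : y ∈ epsSubdiff (fun z => Φ z + (((ρ / 2) * ‖z‖ ^ 2 : ℝ) : EReal)) ε x) :
    y - ρ • x ∈ epsSubdiff Φ
      (if ε ≤ ρ * D ^ 2 / 2 then D * Real.sqrt (2 * ρ * ε) else ρ * D ^ 2 / 2 + ε) x :=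
  stmt8_general Φ hproper hconvex D hD ρ hρ ε hε x y hy
end
end

section
/- Let g, h : ℝ^d → ℝ ∪ {+∞} be proper lower semicontinuous convex functions, ε ≥ 0, and x̂ a point with g(x̂) finite and ∂h(x̂) nonempty. Suppose ŷ ∈ ∂h(x̂) satisfies ⟨ŷ, x̂⟩ − g*(ŷ) ≤ ⟨y, x̂⟩ − g*(y) for all y ∈ ∂h(x̂) (i.e., ŷ minimizes ⟨y, x̂⟩ − g*(y) over ∂h(x̂)). Then x̂ is an ε-strong critical point of g − h (i.e., ∂h(x̂) ⊆ ∂_ε g(x̂)) if and only if x̂ ∈ ∂_ε g*(ŷ). -/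
open RealInnerProductSpace

noncomputable section

/-- The Fenchel conjugate `f*(y) = sup_x (⟨x, y⟩ − f(x))`, valued in `EReal`. -/
def eConj {d : ℕ} (f : E d → EReal) (y : E d) : EReal :=
  ⨆ x : E d, (((⟪x, y⟫ : ℝ) : EReal) - f x)

/-- Fenchel–Moreau-type affine minorant lemma. -/
lemma FM {d : ℕ} (g : E d → EReal) (hbot : ∀ x, g x ≠ ⊥)
    (hconv : ERealConvex g) (hlsc : LowerSemicontinuous g)
    (xh : E d) (r : ℝ) (hgx : g xh = (r : EReal)) (α : ℝ) (hα : α < r) :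
    ∃ (z : E d) (β : ℝ), (∀ x, ((⟪x, z⟫ - β : ℝ) : EReal) ≤ g x) ∧ α < ⟪xh, z⟫ - β := by
  set S : Set (E d × ℝ) := {p | g p.1 ≤ (p.2 : EReal)} with hS
  have hSconv : Convex ℝ S := by
    rintro p hp q hq a b ha hb hab
    have h1 := hconv p.1 q.1 b hb (by linarith)
    have h1t : (1 : ℝ) - b = a := by linarith
    rw [h1t] at h1
    -- extract real values
    have hp' : g p.1 ≤ ((p.2 : ℝ) : EReal) := hp
    have hq' : g q.1 ≤ ((q.2 : ℝ) : EReal) := hq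
    have hp1 : g p.1 ≠ ⊤ := fun ht => by rw [ht] at hp'; exact absurd hp' (not_le.2 (EReal.coe_lt_top _))
    have hq1 : g q.1 ≠ ⊤ := fun ht => by rw [ht] at hq'; exact absurd hq' (not_le.2 (EReal.coe_lt_top _))
    have hps : ((g p.1).toReal : EReal) = g p.1 := EReal.coe_toReal hp1 (hbot _)
    have hqs : ((g q.1).toReal : EReal) = g q.1 := EReal.coe_toReal hq1 (hbot _)
    have hpl : (g p.1).toReal ≤ p.2 := by
      rw [← EReal.coe_le_coe_iff, hps]; exact hp'
    have hql : (g q.1).toReal ≤ q.2 := by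
      rw [← EReal.coe_le_coe_iff, hqs]; exact hq'
    show g (a • p.1 + b • q.1) ≤ ((a * p.2 + b * q.2 : ℝ) : EReal)
    rw [← hps, ← hqs, ← EReal.coe_mul, ← EReal.coe_mul, ← EReal.coe_add] at h1
    refine le_trans h1 (EReal.coe_le_coe_iff.2 ?_)
    have := mul_le_mul_of_nonneg_left hpl ha
    have := mul_le_mul_of_nonneg_left hql hb
    linarith
  have hSclosed : IsClosed S := by
    rw [← isOpen_compl_iff, isOpen_iff_mem_nhds]
    rintro ⟨x, t⟩ hxt
    have hlt : ((t : ℝ) : EReal) < g x := not_le.1 hxt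
    obtain ⟨c, hc1, hc2⟩ := EReal.exists_between_coe_real hlt
    have hev : ∀ᶠ x' in nhds x, (c : EReal) < g x' := hlsc x _ hc2
    have h2 : {s : ℝ | s < c} ∈ nhds t := Iio_mem_nhds (by exact_mod_cast hc1)
    rw [nhds_prod_eq]
    filter_upwards [Filter.prod_mem_prod hev h2] with p hp
    exact not_le.2 (lt_trans (EReal.coe_lt_coe_iff.2 hp.2) hp.1)
  have hnm : (xh, α) ∉ S := by
    simp only [hS, Set.mem_setOf_eq, hgx]
    exact not_le.2 (EReal.coe_lt_coe_iff.2 hα)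
  obtain ⟨f, u, hfu, hfS⟩ := geometric_hahn_banach_point_closed hSconv hSclosed hnm
  set c : ℝ := f (0, 1) with hc
  set w : E d := (InnerProductSpace.toDual ℝ (E d)).symm
    (f.comp (ContinuousLinearMap.inl ℝ (E d) ℝ)) with hw
  have hwf : ∀ x : E d, ⟪w, x⟫ = f (x, 0) := by
    intro x
    rw [hw, InnerProductSpace.toDual_symm_apply]
    rfl
  have hft : ∀ (x : E d) (t : ℝ), f (x, t) = ⟪w, x⟫ + t * c := by
    intro x t
    have : (x, t) = (x, (0 : ℝ)) + t • ((0 : E d), (1 : ℝ)) := by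
      simp [Prod.ext_iff]
    rw [this, map_add, map_smul, hwf, smul_eq_mul, hc]
  have hxr : (xh, r) ∈ S := by simp [hS, hgx]
  have h1 : ⟪w, xh⟫ + α * c < u := by rw [← hft]; exact hfu
  have h2 : u < ⟪w, xh⟫ + r * c := by rw [← hft]; exact hfS _ hxr
  have hcpos : 0 < c := by nlinarith
  have hkey : ∀ W s : ℝ, u < W + s * c → -c⁻¹ * W - -u / c ≤ s := by
    intro W s h
    have h4 : u * c⁻¹ ≤ W * c⁻¹ + s := by
      have h5 := mul_le_mul_of_nonneg_right h.le (inv_pos.2 hcpos).le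
      calc u * c⁻¹ ≤ (W + s * c) * c⁻¹ := h5
        _ = W * c⁻¹ + s * (c * c⁻¹) := by ring
        _ = W * c⁻¹ + s := by rw [mul_inv_cancel₀ (ne_of_gt hcpos), mul_one]
    rw [div_eq_mul_inv]
    linarith
  have hkey2 : ∀ W s : ℝ, W + s * c < u → s < -c⁻¹ * W - -u / c := by
    intro W s h
    have h4 : W * c⁻¹ + s < u * c⁻¹ := by
      have h5 := mul_lt_mul_of_pos_right h (inv_pos.2 hcpos)
      calc W * c⁻¹ + s = W * c⁻¹ + s * (c * c⁻¹) := by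
            rw [mul_inv_cancel₀ (ne_of_gt hcpos), mul_one]
        _ = (W + s * c) * c⁻¹ := by ring
        _ < u * c⁻¹ := h5
    rw [div_eq_mul_inv]
    linarith
  refine ⟨(-c⁻¹) • w, -u / c, ?_, ?_⟩
  · intro x
    by_cases hx : g x = ⊤
    · rw [hx]; exact le_top
    · have hxs : ((g x).toReal : EReal) = g x := EReal.coe_toReal hx (hbot _)
      set s := (g x).toReal
      have hmem : (x, s) ∈ S := by simp only [hS, Set.mem_setOf_eq]; rw [hxs]
      have h3 : u < ⟪w, x⟫ + s * c := by rw [← hft]; exact hfS _ hmem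
      rw [← hxs]
      apply EReal.coe_le_coe_iff.2
      have hinner : ⟪x, (-c⁻¹) • w⟫ = -c⁻¹ * ⟪w, x⟫ := by
        rw [real_inner_smul_right, real_inner_comm]
      rw [hinner]
      exact hkey _ _ h3
  · have hinner : ⟪xh, (-c⁻¹) • w⟫ = -c⁻¹ * ⟪w, xh⟫ := by
      rw [real_inner_smul_right, real_inner_comm]
    rw [hinner]
    exact hkey2 _ _ h1

/-- Let `g, h` be proper lsc convex, `ε ≥ 0`, `x̂` with `g(x̂)` finite and
`ŷ ∈ ∂h(x̂)` minimizing `⟨y, x̂⟩ − g*(y)` over `y ∈ ∂h(x̂)`. Then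
`x̂` is an ε-strong critical point of `g − h` (`∂h(x̂) ⊆ ∂_ε g(x̂)`) iff `x̂ ∈ ∂_ε g*(ŷ)`. -/
theorem stmt9 {d : ℕ} (g h : E d → EReal)
    (hg_proper : ERealProper g) (hg_convex : ERealConvex g) (hg_lsc : LowerSemicontinuous g)
    (hh_proper : ERealProper h) (hh_convex : ERealConvex h) (hh_lsc : LowerSemicontinuous h)
    (ε : ℝ) (hε : 0 ≤ ε)
    (xhat : E d) (hgx : g xhat ≠ ⊤)
    (yhat : E d) (hyhat : yhat ∈ epsSubdiff h 0 xhat)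
    (hmin : ∀ y ∈ epsSubdiff h 0 xhat,
      ((⟪yhat, xhat⟫ : ℝ) : EReal) - eConj g yhat ≤ ((⟪y, xhat⟫ : ℝ) : EReal) - eConj g y) :
    epsSubdiff h 0 xhat ⊆ epsSubdiff g ε xhat ↔ xhat ∈ epsSubdiff (eConj g) ε yhat := by
  -- g xhat is a real number rg
  obtain ⟨rg, hrg⟩ : ∃ r : ℝ, g xhat = (r : EReal) :=
    ⟨(g xhat).toReal, (EReal.coe_toReal hgx (hg_proper.1 _)).symm⟩
  -- Fenchel–Young lower bound on the conjugate
  have FY : ∀ y z : E d, (((⟪z, y⟫ : ℝ) : EReal) - g z) ≤ eConj g y := by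
    intro y z
    exact le_iSup (fun x => (((⟪x, y⟫ : ℝ) : EReal) - g x)) z
  have hFYx : ∀ y : E d, ((⟪xhat, y⟫ - rg : ℝ) : EReal) ≤ eConj g y := by
    intro y
    have := FY y xhat
    rwa [hrg, ← EReal.coe_sub] at this
  have hne_bot : ∀ y : E d, eConj g y ≠ ⊥ := by
    intro y hb
    have := hFYx y
    rw [hb] at this
    exact EReal.coe_ne_bot _ (le_bot_iff.1 this)
  constructor
  · -- forward direction
    intro hsub
    obtain ⟨-, hyg2⟩ := hsub hyhat
    -- upper bound on eConj g yhat
    have hub : eConj g yhat ≤ ((⟪yhat, xhat⟫ - rg + ε : ℝ) : EReal) := by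
      apply iSup_le
      intro x
      have h1 := hyg2 x
      rw [hrg, ← EReal.coe_add] at h1
      calc ((⟪x, yhat⟫ : ℝ) : EReal) - g x
          ≤ ((⟪x, yhat⟫ : ℝ) : EReal) - ((rg + (⟪yhat, x - xhat⟫ - ε) : ℝ) : EReal) :=
            EReal.sub_le_sub le_rfl h1
        _ = ((⟪x, yhat⟫ - (rg + (⟪yhat, x - xhat⟫ - ε)) : ℝ) : EReal) :=
            (EReal.coe_sub _ _).symm
        _ = ((⟪yhat, xhat⟫ - rg + ε : ℝ) : EReal) := by
            congr 1
            rw [inner_sub_right, real_inner_comm x yhat]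
            ring
    have hnt : eConj g yhat ≠ ⊤ := fun ht => by
      rw [ht] at hub; exact absurd hub (not_le.2 (EReal.coe_lt_top _))
    set rc := (eConj g yhat).toReal with hrcdef
    have hrc : eConj g yhat = (rc : EReal) := (EReal.coe_toReal hnt (hne_bot _)).symm
    have hrcle : rc ≤ ⟪yhat, xhat⟫ - rg + ε := by
      rw [← EReal.coe_le_coe_iff, ← hrc]; exact hub
    refine ⟨⟨rc, hrc⟩, ?_⟩
    intro z
    rw [hrc, ← EReal.coe_add]
    refine le_trans ?_ (hFYx z)
    apply EReal.coe_le_coe_iff.2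
    rw [inner_sub_right]
    have := real_inner_comm xhat yhat
    linarith
  · -- backward direction
    rintro ⟨⟨rc, hrc⟩, hmem2⟩ y hy
    have hmy := hmin y hy
    rw [hrc] at hmy
    -- eConj g y is finite
    have hnty : eConj g y ≠ ⊤ := by
      intro ht
      rw [ht, EReal.sub_top, ← EReal.coe_sub] at hmy
      exact EReal.coe_ne_bot _ (le_bot_iff.1 hmy)
    set rd := (eConj g y).toReal with hrddef
    have hrd : eConj g y = (rd : EReal) := (EReal.coe_toReal hnty (hne_bot _)).symm
    rw [hrd, ← EReal.coe_sub, ← EReal.coe_sub, EReal.coe_le_coe_iff] at hmy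
    -- step 2 : rg + rc ≤ ⟪xhat, yhat⟫ + ε   (via Fenchel–Moreau)
    have step2 : rg ≤ ⟪xhat, yhat⟫ - rc + ε := by
      by_contra hcon
      push_neg at hcon
      obtain ⟨z, β, hminor, hgt⟩ :=
        FM g hg_proper.1 hg_convex hg_lsc xhat rg hrg (⟪xhat, yhat⟫ - rc + ε) hcon
      have hcz : eConj g z ≤ (β : EReal) := by
        apply iSup_le
        intro x
        calc ((⟪x, z⟫ : ℝ) : EReal) - g x
            ≤ ((⟪x, z⟫ : ℝ) : EReal) - ((⟪x, z⟫ - β : ℝ) : EReal) :=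
              EReal.sub_le_sub le_rfl (hminor x)
          _ = ((⟪x, z⟫ - (⟪x, z⟫ - β) : ℝ) : EReal) := (EReal.coe_sub _ _).symm
          _ = (β : EReal) := by norm_num
      have h2 := le_trans (hmem2 z) hcz
      rw [hrc, ← EReal.coe_add, EReal.coe_le_coe_iff, inner_sub_right] at h2
      linarith
    -- conclude y ∈ epsSubdiff g ε xhat
    refine ⟨⟨rg, hrg⟩, ?_⟩
    intro z
    by_cases hz : g z = ⊤
    · rw [hz]; exact le_top
    · have hzs : ((g z).toReal : EReal) = g z := EReal.coe_toReal hz (hg_proper.1 _)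
      set s := (g z).toReal
      have hFYz := FY y z
      rw [← hzs, ← EReal.coe_sub, hrd, EReal.coe_le_coe_iff] at hFYz
      rw [hrg, ← EReal.coe_add, ← hzs]
      apply EReal.coe_le_coe_iff.2
      rw [inner_sub_right]
      have h1 := real_inner_comm xhat yhat
      have h2 := real_inner_comm y xhat
      have h3 := real_inner_comm z y
      linarith
end
end

section
/- Let g : ℝ^d → ℝ ∪ {+∞} be proper lower semicontinuous convex with Fenchel conjugate g*, let C ⊆ ℝ^d be a nonempty compact convex set, and define the concave function φ(w) = ⟨w, x⟩ − g*(w) for a fixed x ∈ ℝ^d; assume φ is finite on C. Let ε ≥ 0 and let {w^t}_{t≥0} ⊆ C and {s^t} be sequences such that s^t ∈ ∂_ε φ(w^t) (ε-superdifferential of the concave function φ) and w^{t+1} minimizes ⟨s^t, w⟩ over w ∈ C, for all t. Define gap(w^t) = max_{w ∈ C} ⟨s^t, w^t − w⟩. Then for every T ≥ 1: min_{0 ≤ t ≤ T−1} gap(w^t) ≤ (φ(w^0) − min_{w ∈ C} φ(w))/T + ε. -/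
open RealInnerProductSpace

noncomputable section

/-!
With step size 1 the Frank–Wolfe gap at `w^t` is attained at the next iterate,
`gap(w^t) = ⟨s^t, w^t − w^{t+1}⟩`, and the ε-superdifferential inequality at `w^t`, tested at
`w^{t+1}`, turns this into the descent estimate `gap(w^t) ≤ φ(w^t) − φ(w^{t+1}) + ε`.
Summing over `t < T` telescopes to `φ(w^0) − φ(w^T) + Tε ≤ φ(w^0) − min_C φ + Tε`, and the
smallest of the `T` gaps is at most their average.
-/

theorem sSup_image_inner_sub_eq_of_isMinOn {F : Type*} [NormedAddCommGroup F]
    [InnerProductSpace ℝ F] {C : Set F} {s w v : F} (hv : v ∈ C)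
    (hmin : IsMinOn (fun u => ⟪s, u⟫) C v) :
    sSup ((fun u => ⟪s, w - u⟫) '' C) = ⟪s, w - v⟫ := by
  refine IsGreatest.csSup_eq ⟨⟨v, hv, rfl⟩, ?_⟩
  rintro _ ⟨u, hu, rfl⟩
  simp only [inner_sub_right]
  linarith [isMinOn_iff.1 hmin u hu]

theorem exists_lt_le_sub_div_add_of_le_sub_succ_add {a r : ℕ → ℝ} {ε : ℝ} {T : ℕ}
    (hT : 1 ≤ T) (h : ∀ t < T, a t ≤ r t - r (t + 1) + ε) :
    ∃ t < T, a t ≤ (r 0 - r T) / T + ε := by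
  have hsum : ∑ t ∈ Finset.range T, a t ≤ ∑ _t ∈ Finset.range T, ((r 0 - r T) / T + ε) :=
    calc ∑ t ∈ Finset.range T, a t
        ≤ ∑ t ∈ Finset.range T, (r t - r (t + 1) + ε) :=
          Finset.sum_le_sum fun t ht => h t (Finset.mem_range.1 ht)
      _ = r 0 - r T + T * ε := by
          rw [Finset.sum_add_distrib, Finset.sum_range_sub']
          simp
      _ = ∑ _t ∈ Finset.range T, ((r 0 - r T) / T + ε) := by
          have : (T : ℝ) ≠ 0 := by positivity
          rw [Finset.sum_const, Finset.card_range, nsmul_eq_mul]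
          field_simp
  obtain ⟨t, ht, hle⟩ :=
    Finset.exists_le_of_sum_le (Finset.nonempty_range_iff.2 (by omega)) hsum
  exact ⟨t, Finset.mem_range.1 ht, hle⟩

theorem stmt11_general {d : ℕ}
    (C : Set (E d))
    (φ : E d → EReal)
    (hfin : ∀ v ∈ C, ∃ r : ℝ, φ v = (r : EReal))
    (ε : ℝ)
    (w : ℕ → E d) (s : ℕ → E d)
    (hwC : ∀ t, w t ∈ C)
    (hs : ∀ t : ℕ, ∀ v : E d, φ v ≤ φ (w t) + ((⟪s t, v - w t⟫ + ε : ℝ) : EReal))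
    (hlin : ∀ t : ℕ, ∀ u ∈ C, ⟪s t, w (t + 1)⟫ ≤ ⟪s t, u⟫)
    (T : ℕ) (hT : 1 ≤ T) :
    ∃ t < T, ((sSup ((fun u => ⟪s t, w t - u⟫) '' C) : ℝ) : EReal) ≤
      (φ (w 0) - sInf (φ '' C)) / (T : EReal) + (ε : EReal) := by
  choose r hr using fun t => hfin (w t) (hwC t)
  have hdescent : ∀ t, ⟪s t, w t - w (t + 1)⟫ ≤ r t - r (t + 1) + ε := by
    intro t
    have h := hs t (w (t + 1))
    rw [hr t, hr (t + 1), ← EReal.coe_add, EReal.coe_le_coe_iff] at h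
    rw [← neg_sub, inner_neg_right]
    linarith
  obtain ⟨t, ht, hgap⟩ :=
    exists_lt_le_sub_div_add_of_le_sub_succ_add hT fun t _ => hdescent t
  have hinf : sInf (φ '' C) ≤ r T := hr T ▸ sInf_le ⟨w T, hwC T, rfl⟩
  refine ⟨t, ht, ?_⟩
  rw [sSup_image_inner_sub_eq_of_isMinOn (hwC (t + 1)) (isMinOn_iff.2 (hlin t)), hr 0]
  calc ((⟪s t, w t - w (t + 1)⟫ : ℝ) : EReal)
      ≤ (((r 0 - r T) / T + ε : ℝ) : EReal) := EReal.coe_le_coe_iff.2 hgap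
    _ = ((r 0 : EReal) - r T) / (T : EReal) + ε := by
      rw [EReal.coe_add, EReal.coe_div, EReal.coe_sub, EReal.coe_coe_eq_natCast]
    _ ≤ ((r 0 : EReal) - sInf (φ '' C)) / (T : EReal) + ε := by
      gcongr
      exact EReal.sub_le_sub le_rfl hinf

/-- Approximate Frank–Wolfe with step size 1 on the concave function
`φ(w) = ⟨w, x⟩ − g*(w)` over a nonempty compact convex set `C` (with `φ` finite on `C`):
if `s^t ∈ ∂_ε φ(w^t)` (ε-superdifferential) and `w^{t+1}` minimizes `⟨s^t, ·⟩` over `C`,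
then for every `T ≥ 1`,
`min_{0 ≤ t < T} gap(w^t) ≤ (φ(w^0) − min_{w ∈ C} φ(w))/T + ε`, where
`gap(w^t) = max_{w ∈ C} ⟨s^t, w^t − w⟩`. -/
theorem stmt11 {d : ℕ} (g : E d → EReal)
    (hg_proper : ERealProper g) (hg_convex : ERealConvex g) (hg_lsc : LowerSemicontinuous g)
    (C : Set (E d)) (hCne : C.Nonempty) (hCcompact : IsCompact C) (hCconvex : Convex ℝ C)
    (x : E d)
    (φ : E d → EReal) (hφ : φ = fun v => ((⟪v, x⟫ : ℝ) : EReal) - eConj g v)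
    (hfin : ∀ v ∈ C, ∃ r : ℝ, φ v = (r : EReal))
    (ε : ℝ) (hε : 0 ≤ ε)
    (w : ℕ → E d) (s : ℕ → E d)
    (hwC : ∀ t, w t ∈ C)
    (hs : ∀ t : ℕ, ∀ v : E d, φ v ≤ φ (w t) + ((⟪s t, v - w t⟫ + ε : ℝ) : EReal))
    (hlin : ∀ t : ℕ, ∀ u ∈ C, ⟪s t, w (t + 1)⟫ ≤ ⟪s t, u⟫)
    (T : ℕ) (hT : 1 ≤ T) :
    ∃ t < T, ((sSup ((fun u => ⟪s t, w t - u⟫) '' C) : ℝ) : EReal) ≤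
      (φ (w 0) - sInf (φ '' C)) / (T : EReal) + (ε : EReal) :=
  stmt11_general C φ hfin ε w s hwC hs hlin T hT
end
end

section
/- Let V = {1,…,d}, let H : 2^V → ℝ be a normalized submodular set function, and let s, x ∈ ℝ^d. Let a₁ > ⋯ > a_m be the distinct values of the coordinates of x, with level sets A_i = {j ∈ V : x_j = a_i} and C_i = A₁ ∪ ⋯ ∪ A_i (C₀ = ∅). Let σ be a permutation of V such that x_{σ(1)} ≥ ⋯ ≥ x_{σ(d)} and, within each block, s_{σ(|C_{i−1}|+1)} ≥ ⋯ ≥ s_{σ(|C_i|)} for all i = 1,…,m. Define w ∈ ℝ^d by w_{σ(k)} = H(S^σ_k) − H(S^σ_{k−1}) for k = 1,…,d, where S^σ_k = {σ(1),…,σ(k)}. Then for every w' ∈ B(H) satisfying w'(C_i) = H(C_i) for all i = 1,…,m, one has ⟨s, w⟩ ≥ ⟨s, w'⟩. -/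
noncomputable section

/-- The chain set `S^σ_k = {σ(1), …, σ(k)}` (as the image under `σ` of the first `k`
indices of `Fin d`). -/
def chain {d : ℕ} (σ : Equiv.Perm (Fin d)) (k : ℕ) : Finset (Fin d) :=
  (Finset.univ.filter fun j : Fin d => (j : ℕ) < k).image σ

lemma mem_chain {d : ℕ} (σ : Equiv.Perm (Fin d)) (k : ℕ) (j : Fin d) :
    j ∈ chain σ k ↔ (σ.symm j : ℕ) < k := by
  simp only [chain, Finset.mem_image, Finset.mem_filter, Finset.mem_univ, true_and]
  constructor
  · rintro ⟨a, ha, rfl⟩; simpa using ha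
  · intro h; exact ⟨σ.symm j, h, by simp⟩

lemma chain_zero {d : ℕ} (σ : Equiv.Perm (Fin d)) : chain σ 0 = ∅ := by
  ext j; simp [mem_chain]

lemma chain_top {d : ℕ} (σ : Equiv.Perm (Fin d)) : chain σ d = Finset.univ := by
  ext j; simp [mem_chain, (σ.symm j).isLt]

lemma chain_succ {d : ℕ} (σ : Equiv.Perm (Fin d)) (k : ℕ) (hk : k < d) :
    chain σ (k + 1) = insert (σ ⟨k, hk⟩) (chain σ k) := by
  ext j
  simp only [mem_chain, Finset.mem_insert]
  rw [Nat.lt_succ_iff_lt_or_eq]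
  constructor
  · rintro (h | h)
    · exact Or.inr h
    · left
      have : σ.symm j = ⟨k, hk⟩ := Fin.ext h
      rw [← this]; simp
  · rintro (h | h)
    · right
      subst h; simp
    · exact Or.inl h

/-- Let `H` be a normalized submodular function on `V = Fin d`, and let
`σ` be a permutation sorting `x` in decreasing order, breaking ties (within blocks of equal
`x`-values) in decreasing order of `s`. Let `w` be the greedy vector
`w(σ(k)) = H(S^σ_k) − H(S^σ_{k−1})`. Then for every `w'` in the base polyhedron `B(H)` that
is tight on all upper level sets of `x`, one has `⟨s, w⟩ ≥ ⟨s, w'⟩`. -/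
theorem stmt12 {d : ℕ} (H : Finset (Fin d) → ℝ)
    (hH0 : H ∅ = 0)
    (hHsub : ∀ A B : Finset (Fin d), H (A ∪ B) + H (A ∩ B) ≤ H A + H B)
    (s x : Fin d → ℝ)
    (σ : Equiv.Perm (Fin d))
    (hxσ : ∀ k l : Fin d, k ≤ l → x (σ l) ≤ x (σ k))
    (hsσ : ∀ k l : Fin d, k ≤ l → x (σ k) = x (σ l) → s (σ l) ≤ s (σ k))
    (w : Fin d → ℝ)
    (hw : ∀ k : Fin d, w (σ k) = H (chain σ ((k : ℕ) + 1)) - H (chain σ (k : ℕ)))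
    (w' : Fin d → ℝ)
    (hw'V : ∑ j, w' j = H Finset.univ)
    (hw'le : ∀ A : Finset (Fin d), ∑ j ∈ A, w' j ≤ H A)
    (hw'C : ∀ a ∈ Set.range x,
      ∑ j ∈ Finset.univ.filter (fun j => a ≤ x j), w' j
        = H (Finset.univ.filter (fun j => a ≤ x j))) :
    ∑ i, s i * w' i ≤ ∑ i, s i * w i := by
  classical
  set F : ℕ → ℝ := fun k => H (chain σ k) - ∑ j ∈ chain σ k, w' j with hF
  have hF0 : F 0 = 0 := by simp [hF, chain_zero, hH0]
  have hFd : F d = 0 := by simp [hF, chain_top, hw'V]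
  have hFnn : ∀ k, 0 ≤ F k := fun k => sub_nonneg.2 (hw'le _)
  set S : ℕ → ℝ := fun k => if h : k < d then s (σ ⟨k, h⟩) else 0 with hS
  have key : ∀ k : Fin d,
      s (σ k) * w (σ k) - s (σ k) * w' (σ k) = S (k : ℕ) * (F ((k : ℕ) + 1) - F (k : ℕ)) := by
    intro k
    have hk : (k : ℕ) < d := k.isLt
    have h1 : chain σ ((k : ℕ) + 1) = insert (σ k) (chain σ (k : ℕ)) := by
      have := chain_succ σ (k : ℕ) hk
      simpa using this
    have h2 : σ k ∉ chain σ (k : ℕ) := by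
      rw [mem_chain]; simp
    have hw'' : (∑ j ∈ chain σ ((k : ℕ) + 1), w' j)
        = w' (σ k) + ∑ j ∈ chain σ (k : ℕ), w' j := by
      rw [h1, Finset.sum_insert h2]
    have hFdiff : F ((k : ℕ) + 1) - F (k : ℕ) = w (σ k) - w' (σ k) := by
      simp only [hF]
      rw [hw k, hw'']
      ring
    rw [hFdiff, hS]
    simp only [hk, dif_pos, Fin.eta]
    ring
  have main : 0 ≤ ∑ k ∈ Finset.range d, S k * (F (k + 1) - F k) := by
    have hparts := Finset.sum_range_by_parts S (fun k => F (k + 1) - F k) d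
    simp only [smul_eq_mul] at hparts
    rw [hparts]
    have hG : ∀ n : ℕ, ∑ i ∈ Finset.range n, (F (i + 1) - F i) = F n := by
      intro n
      rw [Finset.sum_range_sub F n, hF0, sub_zero]
    rw [hG d, hFd, mul_zero, zero_sub]
    rw [neg_nonneg]
    apply Finset.sum_nonpos
    intro i hi
    rw [Finset.mem_range] at hi
    have hi1 : i + 1 < d := by omega
    have hi0 : i < d := by omega
    set k : Fin d := ⟨i, hi0⟩ with hkdef
    set k' : Fin d := ⟨i + 1, hi1⟩ with hk'def
    have hkk' : k ≤ k' := by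
      rw [Fin.le_def]; simp [hkdef, hk'def]
    have hx : x (σ k') ≤ x (σ k) := hxσ k k' hkk'
    have hSi : S i = s (σ k) := by simp [hS, hi0, hkdef]
    have hSi1 : S (i + 1) = s (σ k') := by simp [hS, hi1, hk'def]
    rw [hG]
    rcases eq_or_lt_of_le hx with heq | hlt
    · have hss : s (σ k') ≤ s (σ k) := hsσ k k' hkk' heq.symm
      have hle : S (i + 1) - S i ≤ 0 := by rw [hSi, hSi1]; linarith
      exact mul_nonpos_of_nonpos_of_nonneg hle (hFnn _)
    · have hchain : chain σ (i + 1) = Finset.univ.filter (fun j => x (σ k) ≤ x j) := by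
        ext j
        rw [mem_chain, Finset.mem_filter]
        simp only [Finset.mem_univ, true_and]
        constructor
        · intro hj
          have hle : σ.symm j ≤ k := by
            rw [Fin.le_def]
            simp only [hkdef]
            omega
          have := hxσ (σ.symm j) k hle
          simpa using this
        · intro hxj
          by_contra hcon
          push_neg at hcon
          have hle : k' ≤ σ.symm j := by
            rw [Fin.le_def]
            simp only [hk'def]
            omega
          have := hxσ k' (σ.symm j) hle
          simp only [Equiv.apply_symm_apply] at this
          linarith
      have hFz : F (i + 1) = 0 := by
        have hmem : x (σ k) ∈ Set.range x := ⟨σ k, rfl⟩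
        have := hw'C (x (σ k)) hmem
        simp only [hF, hchain, this, sub_self]
      rw [hFz, mul_zero]
  have h1 : ∑ i, s i * w i - ∑ i, s i * w' i
      = ∑ k ∈ Finset.range d, S k * (F (k + 1) - F k) := by
    rw [← Finset.sum_sub_distrib,
      ← Equiv.sum_comp σ (fun i => s i * w i - s i * w' i)]
    rw [Finset.sum_congr rfl (fun k _ => key k)]
    exact Fin.sum_univ_eq_sum_range (fun k => S k * (F (k + 1) - F k)) d
  linarith
end
end

section
/- Let V be a finite set, F : 2^V → ℝ a set function, and α > 0. Then F is α-weakly DR-submodular (i.e., F(A ∪ {i}) − F(A) ≥ α·(F(B ∪ {i}) − F(B)) for all A ⊆ B ⊆ V and i ∈ V ∖ B) if and only if F(A) + α·F(B) ≥ F(A ∩ B) + α·F(A ∪ B) for all A, B ⊆ V. Moreover, if F is additionally normalized (F(∅) = 0), then F is α-submodular, i.e., F(A) + F(B) ≥ α·(F(A ∪ B) + F(A ∩ B)) for all A, B ⊆ V. -/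
private lemma key15 {V : Type*} [DecidableEq V] (F : Finset V → ℝ) (α : ℝ)
    (hDR : ∀ A B : Finset V, A ⊆ B → ∀ i ∉ B,
      α * (F (insert i B) - F B) ≤ F (insert i A) - F A) :
    ∀ S A B : Finset V, A ⊆ B → Disjoint S B →
      α * (F (B ∪ S) - F B) ≤ F (A ∪ S) - F A := by
  intro S
  induction S using Finset.induction_on with
  | empty => intro A B hAB _; simp
  | @insert i S' hi ih =>
      intro A B hAB hdisj
      have hdS' : Disjoint S' B := (Finset.disjoint_insert_left.mp hdisj).2
      have hiB : i ∉ B := (Finset.disjoint_insert_left.mp hdisj).1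
      have hiBS' : i ∉ B ∪ S' := by
        simp only [Finset.mem_union]; rintro (h | h) <;> [exact hiB h; exact hi h]
      have hsub : A ∪ S' ⊆ B ∪ S' := Finset.union_subset_union hAB (subset_refl _)
      have h1 := hDR (A ∪ S') (B ∪ S') hsub i hiBS'
      have h2 := ih A B hAB hdS'
      have e1 : B ∪ insert i S' = insert i (B ∪ S') := Finset.union_insert i B S'
      have e2 : A ∪ insert i S' = insert i (A ∪ S') := Finset.union_insert i A S'
      rw [e1, e2]
      nlinarith [h1, h2]

/-- For a set function `F` on a finite set `V` and `α > 0`: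
`F` is α-weakly DR-submodular iff `F(A) + α F(B) ≥ F(A ∩ B) + α F(A ∪ B)` for all `A, B`.
Moreover, if `F` is normalized and α-weakly DR-submodular, then `F` is α-submodular. -/
theorem stmt15 {V : Type*} [Fintype V] [DecidableEq V]
    (F : Finset V → ℝ) (α : ℝ) (hα : 0 < α) :
    ((∀ A B : Finset V, A ⊆ B → ∀ i ∉ B,
        α * (F (insert i B) - F B) ≤ F (insert i A) - F A) ↔
      (∀ A B : Finset V, F (A ∩ B) + α * F (A ∪ B) ≤ F A + α * F B)) ∧
    (F ∅ = 0 →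
      (∀ A B : Finset V, A ⊆ B → ∀ i ∉ B,
        α * (F (insert i B) - F B) ≤ F (insert i A) - F A) →
      ∀ A B : Finset V, α * (F (A ∪ B) + F (A ∩ B)) ≤ F A + F B) := by
  have main : (∀ A B : Finset V, A ⊆ B → ∀ i ∉ B,
        α * (F (insert i B) - F B) ≤ F (insert i A) - F A) →
      ∀ A B : Finset V, F (A ∩ B) + α * F (A ∪ B) ≤ F A + α * F B := by
    intro hDR A B
    have hd : Disjoint (A \ B) B := Finset.sdiff_disjoint
    have h := key15 F α hDR (A \ B) (A ∩ B) B Finset.inter_subset_right hd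
    have e1 : B ∪ (A \ B) = A ∪ B := by
      rw [Finset.union_sdiff_self_eq_union, Finset.union_comm]
    have e2 : (A ∩ B) ∪ (A \ B) = A := by
      ext x; simp only [Finset.mem_union, Finset.mem_inter, Finset.mem_sdiff]
      tauto
    rw [e1, e2] at h
    linarith
  constructor
  · constructor
    · exact main
    · intro h A B hAB i hiB
      have := h (insert i A) B
      have e1 : insert i A ∩ B = A := by
        ext x; simp only [Finset.mem_inter, Finset.mem_insert]
        constructor
        · rintro ⟨h1 | h1, h2⟩
          · exact absurd (h1 ▸ h2) hiB
          · exact h1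
        · intro hx; exact ⟨Or.inr hx, hAB hx⟩
      have e2 : insert i A ∪ B = insert i B := by
        rw [Finset.insert_union, Finset.union_eq_right.mpr hAB]
      rw [e1, e2] at this
      linarith
  · intro h0 hDR A B
    have h1 := main hDR A B
    have hneg : ∀ S : Finset V, (α - 1) * F S ≤ 0 := by
      intro S
      have := key15 F α hDR S ∅ ∅ (subset_refl _) (Finset.disjoint_empty_right _)
      simp [h0] at this
      nlinarith
    have h2 := hneg B
    have h3 := hneg (A ∩ B)
    nlinarith
end

section
/- Let V be a finite set, α > 1/2, and F : 2^V → ℝ an α-submodular set function, i.e., F(A) + F(B) ≥ α·(F(A ∪ B) + F(A ∩ B)) for all A, B ⊆ V. Let ε ≥ 0 and let X̂ ⊆ V be an ε-strong local minimum of F, i.e., F(X̂) ≤ F(Y) + ε for all Y ⊆ X̂ and all Y ⊇ X̂. Then F(X̂) ≤ (1/(2α − 1)) · ( min_{X ⊆ V} F(X) + 2εα ). -/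
/-- If `F` is α-submodular with `α > 1/2` and `X̂` is an ε-strong local
minimum (`F(X̂) ≤ F(Y) + ε` for all `Y ⊆ X̂` and all `Y ⊇ X̂`), then
`F(X̂) ≤ (1/(2α − 1)) (min_X F(X) + 2εα)`. -/
theorem stmt16 {V : Type*} [Fintype V] [DecidableEq V]
    (F : Finset V → ℝ) (α : ℝ) (hα : 1 / 2 < α)
    (hF : ∀ A B : Finset V, α * (F (A ∪ B) + F (A ∩ B)) ≤ F A + F B)
    (ε : ℝ) (hε : 0 ≤ ε) (Xhat : Finset V)
    (hloc₁ : ∀ Y ⊆ Xhat, F Xhat ≤ F Y + ε)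
    (hloc₂ : ∀ Y : Finset V, Xhat ⊆ Y → F Xhat ≤ F Y + ε) :
    ∀ X : Finset V, F Xhat ≤ (1 / (2 * α - 1)) * (F X + 2 * ε * α) := by
  intro X
  have h1 := hF X Xhat
  have h2 := hloc₂ (X ∪ Xhat) Finset.subset_union_right
  have h3 := hloc₁ (X ∩ Xhat) Finset.inter_subset_right
  have hpos : 0 < 2 * α - 1 := by linarith
  rw [div_mul_eq_mul_div, one_mul, le_div_iff₀ hpos]
  nlinarith
end

section
/- Let V be a finite set, G : 2^V → ℝ a submodular set function, β ∈ (0,1], and H : 2^V → ℝ a normalized, non-decreasing, β-weakly DR-supermodular set function (i.e., H(B ∪ {i}) − H(B) ≥ β·(H(A ∪ {i}) − H(A)) for all A ⊆ B ⊆ V and i ∈ V ∖ B). Set F = G − H. Let ε ≥ 0, let X̂ ⊆ V be an ε-strong local minimum of F, and let X* be a minimizer of F over 2^V. Then F(X̂) ≤ G(X*) − β·H(X*) + 2ε. -/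
/-!
Put `A = X̂ ∩ X*`. Comparing `X̂` with its subset `A` and its superset `X̂ ∪ X*` and adding the
two inequalities, submodularity of `G` gives
`F(X̂) ≤ G(X*) - (H(X̂ ∪ X*) - H(X̂)) - H(A) + 2ε`.
Adding the elements of `X* \ X̂` one at a time, weak DR-supermodularity bounds the marginal gain
`H(X̂ ∪ X*) - H(X̂)` below by `β (H(X*) - H(A))`, and `(1 - β) H(A) ≥ 0` finishes the proof.
-/

section

variable {V : Type*} [DecidableEq V]

def WeaklyDRSupermodular (β : ℝ) (H : Finset V → ℝ) : Prop :=
  ∀ A B : Finset V, A ⊆ B → ∀ i ∉ B, β * (H (insert i A) - H A) ≤ H (insert i B) - H B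

namespace WeaklyDRSupermodular

open Finset

variable {β : ℝ} {H : Finset V → ℝ}

theorem union_disjoint (hH : WeaklyDRSupermodular β H)
    {A B : Finset V} (hAB : A ⊆ B) (D : Finset V) (hDB : Disjoint D B) :
    β * (H (A ∪ D) - H A) ≤ H (B ∪ D) - H B := by
  induction D using Finset.induction_on with
  | empty => simp
  | insert i D hiD ih =>
    obtain ⟨hiB, hDB⟩ := disjoint_insert_left.mp hDB
    have hstep := hH (A ∪ D) (B ∪ D) (union_subset_union_left hAB) i
      (by simp [hiB, hiD])
    rw [union_insert, union_insert]
    linear_combination ih hDB + hstep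

theorem union_inter (hH : WeaklyDRSupermodular β H) (B C : Finset V) :
    β * (H C - H (B ∩ C)) ≤ H (B ∪ C) - H B := by
  have h := hH.union_disjoint (inter_subset_right (s₁ := C)) (C \ B) sdiff_disjoint
  rwa [union_comm (C ∩ B), sdiff_union_inter, union_sdiff_self_eq_union, inter_comm C B] at h

end WeaklyDRSupermodular

end

theorem stmt17_general {V : Type*} [DecidableEq V]
    (G H : Finset V → ℝ) (β : ℝ) (hβ1 : β ≤ 1)
    (hGsub : ∀ A B : Finset V, G (A ∪ B) + G (A ∩ B) ≤ G A + G B)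
    (hH0 : H ∅ = 0)
    (hHmono : ∀ A B : Finset V, A ⊆ B → H A ≤ H B)
    (hHdr : ∀ A B : Finset V, A ⊆ B → ∀ i ∉ B,
      β * (H (insert i A) - H A) ≤ H (insert i B) - H B)
    (ε : ℝ) (Xhat : Finset V)
    (hloc₁ : ∀ Y ⊆ Xhat, G Xhat - H Xhat ≤ (G Y - H Y) + ε)
    (hloc₂ : ∀ Y : Finset V, Xhat ⊆ Y → G Xhat - H Xhat ≤ (G Y - H Y) + ε)
    (Xstar : Finset V) :
    G Xhat - H Xhat ≤ G Xstar - β * H Xstar + 2 * ε := by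
  have hdown := hloc₁ (Xhat ∩ Xstar) Finset.inter_subset_left
  have hup := hloc₂ (Xhat ∪ Xstar) Finset.subset_union_left
  have hsub := hGsub Xhat Xstar
  have hgain := WeaklyDRSupermodular.union_inter hHdr Xhat Xstar
  have hinter_nonneg : 0 ≤ H (Xhat ∩ Xstar) := hH0 ▸ hHmono ∅ _ (Finset.empty_subset _)
  have hslack : 0 ≤ (1 - β) * H (Xhat ∩ Xstar) :=
    mul_nonneg (sub_nonneg.mpr hβ1) hinter_nonneg
  linarith

/-- Let `G` be submodular, `H` normalized non-decreasing β-weakly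
DR-supermodular with `β ∈ (0,1]`, and `F = G − H`. If `X̂` is an ε-strong local minimum of
`F` and `X*` minimizes `F`, then `F(X̂) ≤ G(X*) − β H(X*) + 2ε`. -/
theorem stmt17 {V : Type*} [Fintype V] [DecidableEq V]
    (G H : Finset V → ℝ) (β : ℝ) (hβ0 : 0 < β) (hβ1 : β ≤ 1)
    (hGsub : ∀ A B : Finset V, G (A ∪ B) + G (A ∩ B) ≤ G A + G B)
    (hH0 : H ∅ = 0)
    (hHmono : ∀ A B : Finset V, A ⊆ B → H A ≤ H B)
    (hHdr : ∀ A B : Finset V, A ⊆ B → ∀ i ∉ B,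
      β * (H (insert i A) - H A) ≤ H (insert i B) - H B)
    (ε : ℝ) (hε : 0 ≤ ε) (Xhat : Finset V)
    (hloc₁ : ∀ Y ⊆ Xhat, G Xhat - H Xhat ≤ (G Y - H Y) + ε)
    (hloc₂ : ∀ Y : Finset V, Xhat ⊆ Y → G Xhat - H Xhat ≤ (G Y - H Y) + ε)
    (Xstar : Finset V) (hXstar : ∀ X : Finset V, G Xstar - H Xstar ≤ G X - H X) :
    G Xhat - H Xhat ≤ G Xstar - β * H Xstar + 2 * ε :=
  stmt17_general G H β hβ1 hGsub hH0 hHmono hHdr ε Xhat hloc₁ hloc₂ Xstar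
end

section
/- Let V be a finite set with |V| = d and F : 2^V → ℝ a supermodular set function, i.e., F(A) + F(B) ≤ F(A ∪ B) + F(A ∩ B) for all A, B ⊆ V. Let ε ≥ 0 and suppose X ⊆ V is an ε-local minimum of F, i.e., F(X) ≤ F(X ∪ {i}) + ε for all i ∈ V ∖ X and F(X) ≤ F(X ∖ {i}) + ε for all i ∈ X. Then X is an εd-strong local minimum of F, i.e., F(X) ≤ F(Y) + εd for all Y ⊆ X and all Y ⊇ X. -/
/-- Let `F` be supermodular on a finite set `V` with `|V| = d`, `ε ≥ 0`,
and `X` an ε-local minimum of `F` (adding or removing one element does not decrease `F` by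
more than `ε`). Then `X` is an `εd`-strong local minimum:
`F(X) ≤ F(Y) + εd` for all `Y ⊆ X` and all `Y ⊇ X`. -/
theorem stmt18 {V : Type*} [Fintype V] [DecidableEq V]
    (F : Finset V → ℝ)
    (hFsup : ∀ A B : Finset V, F A + F B ≤ F (A ∪ B) + F (A ∩ B))
    (ε : ℝ) (hε : 0 ≤ ε) (X : Finset V)
    (hadd : ∀ i ∉ X, F X ≤ F (insert i X) + ε)
    (hrem : ∀ i ∈ X, F X ≤ F (X.erase i) + ε) :
    (∀ Y ⊆ X, F X ≤ F Y + ε * (Fintype.card V)) ∧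
    (∀ Y : Finset V, X ⊆ Y → F X ≤ F Y + ε * (Fintype.card V)) := by
  have down : ∀ n : ℕ, ∀ Y ⊆ X, (X \ Y).card = n → F X ≤ F Y + ε * n := by
    intro n
    induction n with
    | zero =>
      intro Y hYX hcard
      have : X = Y := by
        have h := Finset.sdiff_eq_empty_iff_subset.mp (Finset.card_eq_zero.mp hcard)
        exact Finset.Subset.antisymm h hYX
      simp [this]
    | succ n ih =>
      intro Y hYX hcard
      have hne : (X \ Y).Nonempty := by
        rw [← Finset.card_pos, hcard]; omega
      obtain ⟨i, hi⟩ := hne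
      have hiX : i ∈ X := (Finset.mem_sdiff.mp hi).1
      have hiY : i ∉ Y := (Finset.mem_sdiff.mp hi).2
      have hsub : insert i Y ⊆ X := Finset.insert_subset hiX hYX
      have hc : (X \ insert i Y).card = n := by
        have : X \ insert i Y = (X \ Y).erase i := by
          ext x; simp [Finset.mem_sdiff, Finset.mem_erase]; tauto
        rw [this, Finset.card_erase_of_mem hi, hcard]; omega
      have hIH := ih (insert i Y) hsub hc
      have hu : (X.erase i) ∪ insert i Y = X := by
        ext x
        simp only [Finset.mem_union, Finset.mem_erase, Finset.mem_insert]
        constructor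
        · rintro (⟨_, hx⟩ | (rfl | hx)) <;> [exact hx; exact hiX; exact hYX hx]
        · intro hx; by_cases hxi : x = i
          · right; left; exact hxi
          · left; exact ⟨hxi, hx⟩
      have hint : (X.erase i) ∩ insert i Y = Y := by
        ext x
        simp only [Finset.mem_inter, Finset.mem_erase, Finset.mem_insert]
        constructor
        · rintro ⟨⟨hxi, _⟩, (rfl | hx)⟩; exact absurd rfl hxi; exact hx
        · intro hx; exact ⟨⟨fun h => hiY (h ▸ hx), hYX hx⟩, Or.inr hx⟩
      have hsupm := hFsup (X.erase i) (insert i Y)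
      rw [hu, hint] at hsupm
      have hr := hrem i hiX
      push_cast
      push_cast at hIH
      linarith
  have up : ∀ n : ℕ, ∀ Y : Finset V, X ⊆ Y → (Y \ X).card = n → F X ≤ F Y + ε * n := by
    intro n
    induction n with
    | zero =>
      intro Y hXY hcard
      have : Y = X := by
        have h := Finset.sdiff_eq_empty_iff_subset.mp (Finset.card_eq_zero.mp hcard)
        exact Finset.Subset.antisymm h hXY
      simp [this]
    | succ n ih =>
      intro Y hXY hcard
      have hne : (Y \ X).Nonempty := by
        rw [← Finset.card_pos, hcard]; omega
      obtain ⟨i, hi⟩ := hne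
      have hiY : i ∈ Y := (Finset.mem_sdiff.mp hi).1
      have hiX : i ∉ X := (Finset.mem_sdiff.mp hi).2
      have hsub : X ⊆ Y.erase i := fun x hx =>
        Finset.mem_erase.mpr ⟨fun h => hiX (h ▸ hx), hXY hx⟩
      have hc : (Y.erase i \ X).card = n := by
        have : Y.erase i \ X = (Y \ X).erase i := by
          ext x; simp [Finset.mem_sdiff, Finset.mem_erase]; tauto
        rw [this, Finset.card_erase_of_mem hi, hcard]; omega
      have hIH := ih (Y.erase i) hsub hc
      have hu : (Y.erase i) ∪ insert i X = Y := by
        ext x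
        simp only [Finset.mem_union, Finset.mem_erase, Finset.mem_insert]
        constructor
        · rintro (⟨_, hx⟩ | (rfl | hx)) <;> [exact hx; exact hiY; exact hXY hx]
        · intro hx; by_cases hxi : x = i
          · right; left; exact hxi
          · left; exact ⟨hxi, hx⟩
      have hint : (Y.erase i) ∩ insert i X = X := by
        ext x
        simp only [Finset.mem_inter, Finset.mem_erase, Finset.mem_insert]
        constructor
        · rintro ⟨⟨hxi, _⟩, (rfl | hx)⟩; exact absurd rfl hxi; exact hx
        · intro hx; exact ⟨⟨fun h => hiX (h ▸ hx), hXY hx⟩, Or.inr hx⟩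
      have hsupm := hFsup (Y.erase i) (insert i X)
      rw [hu, hint] at hsupm
      have ha := hadd i hiX
      push_cast
      push_cast at hIH
      linarith
  have hbound : ∀ (A : Finset V), ε * (A.card : ℝ) ≤ ε * (Fintype.card V : ℝ) := by
    intro A
    apply mul_le_mul_of_nonneg_left _ hε
    exact_mod_cast Finset.card_le_card (Finset.subset_univ A)
  constructor
  · intro Y hYX
    calc F X ≤ F Y + ε * ((X \ Y).card : ℝ) := down _ Y hYX rfl
    _ ≤ F Y + ε * (Fintype.card V : ℝ) := by linarith [hbound (X \ Y)]
  · intro Y hXY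
    calc F X ≤ F Y + ε * ((Y \ X).card : ℝ) := up _ Y hXY rfl
    _ ≤ F Y + ε * (Fintype.card V : ℝ) := by linarith [hbound (Y \ X)]
end

section
/- Let V be a finite set, β ≥ 1, and F : 2^V → ℝ a non-positive β-supermodular set function, i.e., F(X) ≤ 0 for all X ⊆ V and β·(F(A) + F(B)) ≤ F(A ∪ B) + F(A ∩ B) for all A, B ⊆ V. Let ε ≥ 0 and let X̂ ⊆ V be an ε-strong local minimum of F. Then min{F(X̂), F(V ∖ X̂)} ≤ (1/(3β²))·min_{X ⊆ V} F(X) + (2/3)ε. If additionally F is symmetric (F(X) = F(V ∖ X) for all X ⊆ V), then F(X̂) ≤ (1/(2β))·min_{X ⊆ V} F(X) + ε. -/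
/-- Let `F` be a non-positive β-supermodular set function with `β ≥ 1`,
and `X̂` an ε-strong local minimum of `F`. Then
`min{F(X̂), F(V ∖ X̂)} ≤ (1/(3β²)) min_X F(X) + (2/3)ε`; and if moreover `F` is symmetric,
then `F(X̂) ≤ (1/(2β)) min_X F(X) + ε`. -/
theorem stmt19 {V : Type*} [Fintype V] [DecidableEq V]
    (F : Finset V → ℝ) (β : ℝ) (hβ : 1 ≤ β)
    (hFnonpos : ∀ X : Finset V, F X ≤ 0)
    (hFsup : ∀ A B : Finset V, β * (F A + F B) ≤ F (A ∪ B) + F (A ∩ B))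
    (ε : ℝ) (hε : 0 ≤ ε) (Xhat : Finset V)
    (hloc₁ : ∀ Y ⊆ Xhat, F Xhat ≤ F Y + ε)
    (hloc₂ : ∀ Y : Finset V, Xhat ⊆ Y → F Xhat ≤ F Y + ε) :
    (∀ X : Finset V,
      min (F Xhat) (F (Finset.univ \ Xhat)) ≤ (1 / (3 * β ^ 2)) * F X + (2 / 3) * ε) ∧
    ((∀ X : Finset V, F X = F (Finset.univ \ X)) →
      ∀ X : Finset V, F Xhat ≤ (1 / (2 * β)) * F X + ε) := by
  have hβ0 : (0:ℝ) < β := lt_of_lt_of_le one_pos hβ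
  have hβne : β ≠ 0 := ne_of_gt hβ0
  constructor
  · intro X
    set C : Finset V := Finset.univ \ Xhat with hC
    set m : ℝ := min (F Xhat) (F C) with hm
    have hm1 : m ≤ F Xhat := min_le_left _ _
    have hm2 : m ≤ F C := min_le_right _ _
    have hm0 : m ≤ 0 := le_trans hm1 (hFnonpos _)
    -- supermodularity on (X ∩ X̂, X \ X̂)
    have h1 : β * (F (X ∩ Xhat) + F (X \ Xhat)) ≤ F X + F ∅ := by
      have := hFsup (X ∩ Xhat) (X \ Xhat)
      have e1 : (X ∩ Xhat) ∪ (X \ Xhat) = X := by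
        ext a; simp
        try tauto
      have e2 : (X ∩ Xhat) ∩ (X \ Xhat) = ∅ := by
        ext a; simp
        try tauto
      rw [e1, e2] at this; exact this
    -- supermodularity on (X ∪ X̂, univ \ X̂)
    have h2 : β * (F (X ∪ Xhat) + F C) ≤ F Finset.univ + F (X \ Xhat) := by
      have := hFsup (X ∪ Xhat) C
      have e1 : (X ∪ Xhat) ∪ C = Finset.univ := by
        ext a; simp [hC]
      have e2 : (X ∪ Xhat) ∩ C = X \ Xhat := by
        ext a; (try simp [hC]); (try tauto)
      rw [e1, e2] at this; exact this
    have ha : F Xhat - ε ≤ F (X ∩ Xhat) := by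
      have := hloc₁ (X ∩ Xhat) Finset.inter_subset_right; linarith
    have hb : F Xhat - ε ≤ F (X ∪ Xhat) := by
      have := hloc₂ (X ∪ Xhat) Finset.subset_union_right; linarith
    have hU : F Finset.univ ≤ 0 := hFnonpos _
    have hE : F ∅ ≤ 0 := hFnonpos _
    -- lower bound on F (X \ Xhat)
    have hd : β * (2 * m - ε) ≤ F (X \ Xhat) := by
      have : β * ((F Xhat - ε) + F C) ≤ β * (F (X ∪ Xhat) + F C) := by
        apply mul_le_mul_of_nonneg_left _ (le_of_lt hβ0); linarith
      have h' : β * ((F Xhat - ε) + F C) ≤ F (X \ Xhat) := by nlinarith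
      nlinarith
    -- key inequality
    have hkey : 3 * β ^ 2 * m ≤ F X + 2 * β ^ 2 * ε := by
      have hc : β * ((F Xhat - ε) + β * (2 * m - ε)) ≤ F X := by
        have : β * ((F Xhat - ε) + β * (2 * m - ε)) ≤
            β * (F (X ∩ Xhat) + F (X \ Xhat)) := by
          apply mul_le_mul_of_nonneg_left _ (le_of_lt hβ0); linarith
        linarith
      nlinarith [mul_nonneg (sub_nonneg.2 hβ) (neg_nonneg.2 hm0),
        mul_nonneg (sub_nonneg.2 hβ) hε,
        mul_nonneg (mul_nonneg (sub_nonneg.2 hβ) (le_of_lt hβ0)) hε,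
        mul_nonneg (mul_nonneg (sub_nonneg.2 hβ) (le_of_lt hβ0)) (neg_nonneg.2 hm0)]
    calc m = (1 / (3 * β ^ 2)) * (3 * β ^ 2 * m) := by field_simp
      _ ≤ (1 / (3 * β ^ 2)) * (F X + 2 * β ^ 2 * ε) := by
          apply mul_le_mul_of_nonneg_left hkey; positivity
      _ = (1 / (3 * β ^ 2)) * F X + (2 / 3) * ε := by field_simp
  · intro hsym X
    have h1 : β * (F (X ∩ Xhat) + F (X \ Xhat)) ≤ F X + F ∅ := by
      have := hFsup (X ∩ Xhat) (X \ Xhat)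
      have e1 : (X ∩ Xhat) ∪ (X \ Xhat) = X := by
        ext a; simp
        try tauto
      have e2 : (X ∩ Xhat) ∩ (X \ Xhat) = ∅ := by
        ext a; simp
        try tauto
      rw [e1, e2] at this; exact this
    have ha : F Xhat - ε ≤ F (X ∩ Xhat) := by
      have := hloc₁ (X ∩ Xhat) Finset.inter_subset_right; linarith
    have hb : F Xhat - ε ≤ F (X \ Xhat) := by
      have hsub : Xhat ⊆ Finset.univ \ (X \ Xhat) := by
        intro a haX; simp; intro _; exact haX
      have := hloc₂ _ hsub
      rw [← hsym (X \ Xhat)] at this; linarith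
    have hE : F ∅ ≤ 0 := hFnonpos _
    have hkey : 2 * β * F Xhat ≤ F X + 2 * β * ε := by
      have : β * ((F Xhat - ε) + (F Xhat - ε)) ≤
          β * (F (X ∩ Xhat) + F (X \ Xhat)) := by
        apply mul_le_mul_of_nonneg_left _ (le_of_lt hβ0); linarith
      nlinarith
    calc F Xhat = (1 / (2 * β)) * (2 * β * F Xhat) := by field_simp
      _ ≤ (1 / (2 * β)) * (F X + 2 * β * ε) := by
          apply mul_le_mul_of_nonneg_left hkey; positivity
      _ = (1 / (2 * β)) * F X + ε := by field_simp
end
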